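/- arXiv:math/0409046 — 4 statements merged into one kernel-verified Lean document; each statement's English description precedes it below -/
import Mathlib

section
/- Let Γ = (V, E) be a Cayley tree of order 2 and let σ : V → {−1, 1} be a configuration with σ(x) = 1 for all but finitely many x ∈ V. Let D(σ) be the number of edges {x, y} of Γ with σ(x) ≠ σ(y), and let N(σ) be the number of vertices x ∈ V such that σ is not constant on the ball {y ∈ V : d(x, y) ≤ 2}. Then the relative energy of σ with respect to the all-plus configuration for the ferromagnetic Ising Hamiltonian (J₁ = −1, J₂ = 0), namely H(σ, +1) = 2·D(σ), satisfies the Peierls estimate 2·D(σ) ≥ (1/21)·N(σ). -/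
/-- A Cayley tree of order 2: a connected acyclic simple graph every vertex of which has
degree 3. -/
def IsCayleyTree2 {V : Type*} (Γ : SimpleGraph V) : Prop :=
  Γ.Connected ∧ Γ.IsAcyclic ∧ ∀ v : V, (Γ.neighborSet v).ncard = 3

/-- On a connected graph, if `σ` differs at two vertices at distance at most 2, then there
is an edge with different spins one of whose endpoints is at distance at most 1 from `x`. -/
lemma exists_bad_edge_near {V : Type*} (Γ : SimpleGraph V) (hconn : Γ.Connected) (σ : V → ℤ)
    {x y : V} (hd : Γ.dist x y ≤ 2) (hne : σ y ≠ σ x) :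
    ∃ u v : V, Γ.Adj u v ∧ σ u ≠ σ v ∧ Γ.dist x u ≤ 1 := by
  obtain ⟨p, hp⟩ := hconn.exists_walk_length_eq_dist x y
  rw [← hp] at hd
  clear hp
  cases p with
  | nil => exact absurd rfl hne
  | @cons _ b _ ha q =>
    by_cases hb : σ b = σ x
    · -- spin doesn't change on first edge; must change later
      cases q with
      | nil => exact absurd hb hne
      | @cons _ c _ hc r =>
        cases r with
        | nil =>
          refine ⟨b, y, hc, ?_, ?_⟩
          · rw [hb]; exact fun h => hne h.symm
          · have : Γ.dist x b = 1 := SimpleGraph.dist_eq_one_iff_adj.mpr ha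
            omega
        | cons hd' r' => simp [SimpleGraph.Walk.length_cons] at hd
    · exact ⟨x, b, ha, fun h => hb h.symm, by
        rw [SimpleGraph.dist_self]; omega⟩

/-- Peierls estimate for the ferromagnetic Ising model (`J₁ = −1`, `J₂ = 0`) on the Cayley
tree of order 2: for a configuration `σ` equal to `+1` off a finite set, the relative energy
`H(σ, +1) = 2·D(σ)` (where `D(σ)` is the number of edges whose endpoints get different
spins) dominates `(1/21)·N(σ)`, where `N(σ)` is the number of improper balls, i.e. vertices
`x` such that `σ` is not constant on the radius-2 ball around `x`. -/
theorem peierls_estimate {V : Type*} (Γ : SimpleGraph V) (hΓ : IsCayleyTree2 Γ)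
    (σ : V → ℤ) (hσ : ∀ x, σ x = 1 ∨ σ x = -1) (hfin : {x : V | σ x = -1}.Finite) :
    (1 / 21 : ℝ) * ({x : V | ∃ y : V, Γ.dist x y ≤ 2 ∧ σ y ≠ σ x}.ncard : ℝ) ≤
      2 * ({e : Sym2 V | e ∈ Γ.edgeSet ∧ ∃ x y : V, e = s(x, y) ∧ σ x ≠ σ y}.ncard : ℝ) := by
  classical
  obtain ⟨hconn, -, hdeg⟩ := hΓ
  set A := {x : V | ∃ y : V, Γ.dist x y ≤ 2 ∧ σ y ≠ σ x} with hAdef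
  set B := {e : Sym2 V | e ∈ Γ.edgeSet ∧ ∃ x y : V, e = s(x, y) ∧ σ x ≠ σ y} with hBdef
  -- neighbor sets are finite
  have hnbfin : ∀ v : V, (Γ.neighborSet v).Finite := by
    intro v
    by_contra h
    have : (Γ.neighborSet v).ncard = 0 := Set.Infinite.ncard h
    rw [hdeg v] at this
    omega
  by_cases hAfin : A.Finite
  swap
  · rw [Set.Infinite.ncard hAfin]
    push_cast
    rw [mul_zero]
    positivity
  -- B is finite: every bad edge is incident to a vertex with spin -1
  have hinc : ∀ v : V, (Γ.incidenceSet v).Finite := by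
    intro v
    have h1 : Finite (Γ.neighborSet v) := (hnbfin v).to_subtype
    have h2 : Finite (Γ.incidenceSet v) :=
      Finite.of_equiv _ (Γ.incidenceSetEquivNeighborSet v).symm
    exact Set.toFinite _
  have hBfin : B.Finite := by
    apply Set.Finite.subset (Set.Finite.biUnion hfin (fun v _ => hinc v))
    rintro e ⟨he, x, y, rfl, hxy⟩
    rcases hσ x with hx | hx
    · have hy : σ y = -1 := by
        rcases hσ y with hy | hy
        · exact absurd (hx.trans hy.symm) hxy
        · exact hy
      exact Set.mem_biUnion hy ⟨he, Sym2.mem_mk_right x y⟩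
    · exact Set.mem_biUnion hx ⟨he, Sym2.mem_mk_left x y⟩
  -- Finset machinery
  set SA : Finset V := hAfin.toFinset with hSA
  set SB : Finset (Sym2 V) := hBfin.toFinset with hSB
  set cN : V → Finset V := fun v => insert v (hnbfin v).toFinset with hcN
  have hcNcard : ∀ v, (cN v).card ≤ 4 := by
    intro v
    have : (hnbfin v).toFinset.card = 3 := by
      rw [← Set.ncard_eq_toFinset_card _ (hnbfin v)]; exact hdeg v
    calc (cN v).card ≤ (hnbfin v).toFinset.card + 1 := Finset.card_insert_le _ _
      _ ≤ 4 := by omega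
  have hmemcN : ∀ {w v : V}, Γ.dist w v ≤ 1 → w ∈ cN v := by
    intro w v h
    rcases Nat.le_one_iff_eq_zero_or_eq_one.mp h with h0 | h1
    · have : w = v := (hconn.dist_eq_zero_iff).mp h0
      subst this
      exact Finset.mem_insert_self _ _
    · have hadj : Γ.Adj w v := SimpleGraph.dist_eq_one_iff_adj.mp h1
      exact Finset.mem_insert_of_mem ((hnbfin v).mem_toFinset.mpr hadj.symm)
  set g : Sym2 V → Finset V :=
    fun e => Sym2.lift ⟨fun u v => cN u ∪ cN v, fun u v => Finset.union_comm _ _⟩ e with hg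
  have hgcard : ∀ e : Sym2 V, (g e).card ≤ 8 := by
    intro e
    induction e using Sym2.ind with
    | _ u v =>
      have : g s(u, v) = cN u ∪ cN v := rfl
      rw [this]
      calc (cN u ∪ cN v).card ≤ (cN u).card + (cN v).card := Finset.card_union_le _ _
        _ ≤ 8 := by have := hcNcard u; have := hcNcard v; omega
  have hsub : SA ⊆ SB.biUnion g := by
    intro x hx
    have hxA : x ∈ A := hAfin.mem_toFinset.mp hx
    obtain ⟨y, hdy, hne⟩ := hxA
    obtain ⟨u, v, hadj, huv, hdu⟩ := exists_bad_edge_near Γ hconn σ hdy hne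
    have heB : s(u, v) ∈ B := ⟨Γ.mem_edgeSet.mpr hadj, u, v, rfl, huv⟩
    apply Finset.mem_biUnion.mpr
    refine ⟨s(u, v), hBfin.mem_toFinset.mpr heB, ?_⟩
    have : g s(u, v) = cN u ∪ cN v := rfl
    rw [this]
    exact Finset.mem_union_left _ (hmemcN hdu)
  have hcard : SA.card ≤ SB.card * 8 := by
    calc SA.card ≤ (SB.biUnion g).card := Finset.card_le_card hsub
      _ ≤ SB.card * 8 := Finset.card_biUnion_le_card_mul _ _ _ (fun e _ => hgcard e)
  have hAn : A.ncard = SA.card := Set.ncard_eq_toFinset_card _ hAfin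
  have hBn : B.ncard = SB.card := Set.ncard_eq_toFinset_card _ hBfin
  have hABn : A.ncard ≤ 8 * B.ncard := by rw [hAn, hBn]; omega
  have hreal : (A.ncard : ℝ) ≤ 8 * (B.ncard : ℝ) := by exact_mod_cast hABn
  have hBnn : (0 : ℝ) ≤ (B.ncard : ℝ) := Nat.cast_nonneg _
  linarith
end

section
/- Let Γ = (V, E) be a Cayley tree of order 2, with fixed root x₀ and balls V_n. For every n ≥ 1, every β > 0, and every finite set γ ⊆ V, the finite-volume Gibbs measure with all-plus boundary condition satisfies μ_{n,β}^+ ({σ ∈ Ω_n^+ : some connected component C of σ^{−1}(−1) has ∂C = γ}) ≤ exp(−2β·|γ|). -/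
/-- The outer boundary `∂A` of a set of vertices `A`. -/
def outerBoundary {V : Type*} (Γ : SimpleGraph V) (A : Set V) : Set V :=
  {x | x ∉ A ∧ ∃ y ∈ A, Γ.Adj x y}

/-- `C` is a connected component of the subgraph induced on `S`. -/
def IsCompOf {V : Type*} (Γ : SimpleGraph V) (S C : Set V) : Prop :=
  C ⊆ S ∧ C.Nonempty ∧ (Γ.induce C).Connected ∧
    ∀ x ∈ S, ∀ y ∈ C, Γ.Adj x y → x ∈ C

/-- The ball `V_n = {x : d(x₀, x) ≤ n}` around the root `x₀`. -/
def ballSet {V : Type*} (Γ : SimpleGraph V) (x₀ : V) (n : ℕ) : Set V :=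
  {x | Γ.dist x₀ x ≤ n}

/-- The set of edges of `Γ` having at least one endpoint in `A`. -/
def meetingEdges {V : Type*} (Γ : SimpleGraph V) (A : Set V) : Set (Sym2 V) :=
  {e | e ∈ Γ.edgeSet ∧ ∃ x ∈ A, x ∈ e}

/-- The ferromagnetic Ising Hamiltonian (`J₁ = −1`, `J₂ = 0`) in volume `V_n`:
`H_n(σ) = −∑ σ(x)σ(y)`, the sum over all edges meeting `V_n`. -/
noncomputable def isingH {V : Type*} (Γ : SimpleGraph V) (x₀ : V) (n : ℕ) (σ : V → ℤ) : ℤ :=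
  -∑ᶠ e ∈ meetingEdges Γ (ballSet Γ x₀ n),
      Sym2.lift ⟨fun x y => σ x * σ y, fun x y => mul_comm (σ x) (σ y)⟩ e

/-- `Ω_n^ε`: spin configurations equal to `ε` outside `V_n`. -/
def OmegaBC {V : Type*} (Γ : SimpleGraph V) (x₀ : V) (n : ℕ) (ε : ℤ) : Set (V → ℤ) :=
  {σ | (∀ x, σ x = 1 ∨ σ x = -1) ∧ ∀ x ∉ ballSet Γ x₀ n, σ x = ε}

/-- The finite-volume Gibbs measure `μ_{n,β}^ε` of the event `A`. -/
noncomputable def gibbs {V : Type*} (Γ : SimpleGraph V) (x₀ : V) (n : ℕ) (β : ℝ) (ε : ℤ)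
    (A : Set (V → ℤ)) : ℝ :=
  (∑ᶠ σ ∈ A ∩ OmegaBC Γ x₀ n ε, Real.exp (-β * (isingH Γ x₀ n σ : ℝ))) /
    ∑ᶠ σ ∈ OmegaBC Γ x₀ n ε, Real.exp (-β * (isingH Γ x₀ n σ : ℝ))

open SimpleGraph

section Aux
variable {V : Type*} {Γ : SimpleGraph V}

lemma isPath_concat {u v w : V} {p : Γ.Walk u v} (hp : p.IsPath) (h : Γ.Adj v w)
    (hw : w ∉ p.support) : (p.concat h).IsPath := by
  have h2 : (p.concat h).reverse.IsPath := by
    rw [SimpleGraph.Walk.reverse_concat]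
    exact hp.reverse.cons (by simpa [SimpleGraph.Walk.support_reverse] using hw)
  have := h2.reverse
  rwa [SimpleGraph.Walk.reverse_reverse] at this

lemma adj_dist_ne (hc : Γ.Connected) (hac : Γ.IsAcyclic) {x u v : V} (h : Γ.Adj u v) :
    Γ.dist x u ≠ Γ.dist x v := by
  classical
  intro hd
  obtain ⟨p, hp, hpl⟩ := hc.exists_path_of_dist x u
  by_cases hv : v ∈ p.support
  · have h1 := p.length_takeUntil_le hv
    have h2 : (p.takeUntil v hv).length + (p.dropUntil v hv).length = p.length := by
      rw [← SimpleGraph.Walk.length_append, SimpleGraph.Walk.take_spec]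
    have hdu : (p.dropUntil v hv).length ≠ 0 := by
      intro h0
      exact h.ne' (SimpleGraph.Walk.eq_of_length_eq_zero h0)
    have h3 : Γ.dist x v ≤ (p.takeUntil v hv).length := SimpleGraph.dist_le _
    omega
  · have hq : (p.concat h).IsPath := isPath_concat hp h hv
    obtain ⟨r, hr, hrl⟩ := hc.exists_path_of_dist x v
    have huniq := hac.path_unique ⟨p.concat h, hq⟩ ⟨r, hr⟩
    have hlen : (p.concat h).length = r.length := by
      have := congrArg (fun q : Γ.Path x v => q.val.length) huniq
      simpa using this
    rw [SimpleGraph.Walk.length_concat, hpl, hrl] at hlen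
    omega

lemma two_closer_nbrs (hc : Γ.Connected) (hac : Γ.IsAcyclic) {x c y₁ y₂ : V}
    (h1 : Γ.Adj c y₁) (h2 : Γ.Adj c y₂) (hne : y₁ ≠ y₂)
    (hl1 : Γ.dist x y₁ < Γ.dist x c) (hl2 : Γ.dist x y₂ < Γ.dist x c) : False := by
  classical
  have key : ∀ y : V, Γ.Adj c y → Γ.dist x y < Γ.dist x c →
      ∃ (p : Γ.Walk x y), p.IsPath ∧ c ∉ p.support ∧ p.length + 1 = Γ.dist x c := by
    intro y hadj hlt
    have htri : Γ.dist x c ≤ Γ.dist x y + 1 := by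
      have := hc.dist_triangle (u := x) (v := y) (w := c)
      rwa [SimpleGraph.dist_eq_one_iff_adj.mpr hadj.symm] at this
    obtain ⟨p, hp, hpl⟩ := hc.exists_path_of_dist x y
    refine ⟨p, hp, ?_, by omega⟩
    intro hcs
    have h3 : Γ.dist x c ≤ (p.takeUntil c hcs).length := SimpleGraph.dist_le _
    have h1 := p.length_takeUntil_le hcs
    omega
  obtain ⟨p₁, hp₁, hc₁, hl₁⟩ := key y₁ h1 hl1
  obtain ⟨p₂, hp₂, hc₂, hl₂⟩ := key y₂ h2 hl2
  have hq₁ : (p₁.concat h1.symm).IsPath := isPath_concat hp₁ h1.symm hc₁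
  have hq₂ : (p₂.concat h2.symm).IsPath := isPath_concat hp₂ h2.symm hc₂
  have huniq := hac.path_unique ⟨p₁.concat h1.symm, hq₁⟩ ⟨p₂.concat h2.symm, hq₂⟩
  have hw : p₁.concat h1.symm = p₂.concat h2.symm := congrArg Subtype.val huniq
  obtain ⟨hv, -⟩ := SimpleGraph.Walk.concat_inj hw
  exact hne hv

end Aux

section Aux2
variable {V : Type*} {Γ : SimpleGraph V}

lemma walk_in_set {C : Set V} (h : (Γ.induce C).Connected) {u v : V}
    (hu : u ∈ C) (hv : v ∈ C) : ∃ p : Γ.Walk u v, ∀ x ∈ p.support, x ∈ C := by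
  obtain ⟨w⟩ := h ⟨u, hu⟩ ⟨v, hv⟩
  refine ⟨w.map (SimpleGraph.Embedding.induce C).toHom, ?_⟩
  intro x hx
  have hx' : x ∈ (w.map (SimpleGraph.Embedding.induce C).toHom).support := hx
  rw [SimpleGraph.Walk.support_map, List.mem_map] at hx'
  obtain ⟨y, -, rfl⟩ := hx'
  exact y.2

lemma min_degree_two_infinite (hc : Γ.Connected) (hac : Γ.IsAcyclic) {C : Set V}
    (hfin : C.Finite) (hne : C.Nonempty)
    (hdeg : ∀ c ∈ C, ∃ y₁ y₂, y₁ ≠ y₂ ∧ y₁ ∈ C ∧ y₂ ∈ C ∧ Γ.Adj c y₁ ∧ Γ.Adj c y₂) :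
    False := by
  classical
  obtain ⟨x, hx⟩ := hne
  obtain ⟨c, hcC, hmax⟩ := hfin.toFinset.exists_max_image (Γ.dist x)
    (by simpa [Set.Finite.toFinset_nonempty] using ⟨x, hx⟩)
  rw [Set.Finite.mem_toFinset] at hcC
  obtain ⟨y₁, y₂, hne', hy₁, hy₂, a1, a2⟩ := hdeg c hcC
  have m1 : Γ.dist x y₁ ≤ Γ.dist x c := hmax y₁ (hfin.mem_toFinset.mpr hy₁)
  have m2 : Γ.dist x y₂ ≤ Γ.dist x c := hmax y₂ (hfin.mem_toFinset.mpr hy₂)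
  have d1 : Γ.dist x y₁ ≠ Γ.dist x c := fun hd => adj_dist_ne hc hac a1 hd.symm
  have d2 : Γ.dist x y₂ ≠ Γ.dist x c := fun hd => adj_dist_ne hc hac a2 hd.symm
  exact two_closer_nbrs hc hac a1 a2 hne' (lt_of_le_of_ne m1 d1) (lt_of_le_of_ne m2 d2)

lemma unique_nbr_in_comp (hac : Γ.IsAcyclic) {C : Set V} (h : (Γ.induce C).Connected)
    {x y₁ y₂ : V} (hx : x ∉ C) (h1 : y₁ ∈ C) (h2 : y₂ ∈ C)
    (a1 : Γ.Adj x y₁) (a2 : Γ.Adj x y₂) : y₁ = y₂ := by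
  classical
  by_contra hne
  obtain ⟨w, hw⟩ := walk_in_set h h1 h2
  have hxw : x ∉ w.toPath.1.support :=
    fun hmem => hx (hw x (SimpleGraph.Walk.support_toPath_subset w hmem))
  -- the path y₁ - x - y₂
  have hp2 : (SimpleGraph.Walk.cons a1.symm (SimpleGraph.Walk.cons a2
      SimpleGraph.Walk.nil)).IsPath := by
    simp [SimpleGraph.Walk.cons_isPath_iff, hne, a1.ne', a2.ne]
  have := hac.path_unique ⟨_, hp2⟩ w.toPath
  have hxmem : x ∈ w.toPath.1.support := by
    rw [← this]
    simp
  exact hxw hxmem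

end Aux2


section Fin
variable {V : Type*} {Γ : SimpleGraph V}

lemma nbr_finite (hΓ : IsCayleyTree2 Γ) (v : V) : (Γ.neighborSet v).Finite := by
  by_contra hinf
  have h0 : (Γ.neighborSet v).ncard = 0 := Set.Infinite.ncard hinf
  rw [hΓ.2.2 v] at h0
  exact three_ne_zero h0

lemma ball_finite (hΓ : IsCayleyTree2 Γ) (x₀ : V) (n : ℕ) : (ballSet Γ x₀ n).Finite := by
  induction n with
  | zero =>
    have : ballSet Γ x₀ 0 ⊆ {x₀} := by
      intro x hx
      have h0 : Γ.dist x₀ x = 0 := Nat.le_zero.mp hx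
      have : x₀ = x := ((hΓ.1 x₀ x).dist_eq_zero_iff).mp h0
      simp [this.symm]
    exact Set.Finite.subset (Set.finite_singleton _) this
  | succ n ih =>
    have hsub : ballSet Γ x₀ (n+1) ⊆ ballSet Γ x₀ n ∪ ⋃ y ∈ ballSet Γ x₀ n, Γ.neighborSet y := by
      intro x hx
      by_cases hle : Γ.dist x₀ x ≤ n
      · exact Or.inl hle
      · have hx' : Γ.dist x₀ x = n + 1 := le_antisymm hx (by omega)
        -- take a walk x → x₀ of length n+1, first step y
        obtain ⟨p, hp⟩ := (hΓ.1 x x₀).exists_walk_length_eq_dist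
        rw [SimpleGraph.dist_comm, hx'] at hp
        cases p with
        | nil => simp at hp
        | cons h q =>
          rename_i y
          right
          have hq : q.length = n := by simpa using hp
          have hy : Γ.dist x₀ y ≤ n := by
            rw [SimpleGraph.dist_comm]
            exact hq ▸ SimpleGraph.dist_le q
          exact Set.mem_biUnion hy h.symm
    exact Set.Finite.subset (ih.union (Set.Finite.biUnion ih (fun y _ => nbr_finite hΓ y))) hsub

lemma omega_finite (hΓ : IsCayleyTree2 Γ) (x₀ : V) (n : ℕ) (ε : ℤ) :
    (OmegaBC Γ x₀ n ε).Finite := by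
  classical
  have hb := ball_finite hΓ x₀ n
  haveI : Finite ↥(ballSet Γ x₀ n) := hb.to_subtype
  set R : (V → ℤ) → (↥(ballSet Γ x₀ n) → ℤ) := fun σ x => σ x.1 with hR
  have himg : (R '' OmegaBC Γ x₀ n ε).Finite := by
    have hsub : R '' OmegaBC Γ x₀ n ε ⊆
        {f : ↥(ballSet Γ x₀ n) → ℤ | ∀ i, f i ∈ ({1, -1} : Set ℤ)} := by
      rintro f ⟨σ, hσ, rfl⟩ i
      rcases hσ.1 i.1 with h | h <;> simp [hR, h]
    exact Set.Finite.subset (Set.Finite.pi' (fun i => Set.toFinite _)) hsub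
  have hinj : Set.InjOn R (OmegaBC Γ x₀ n ε) := by
    intro σ₁ h₁ σ₂ h₂ hEq
    funext x
    by_cases hx : x ∈ ballSet Γ x₀ n
    · exact congrFun hEq ⟨x, hx⟩
    · rw [h₁.2 x hx, h₂.2 x hx]
  exact Set.Finite.of_finite_image himg hinj

lemma meetingEdges_finite (hΓ : IsCayleyTree2 Γ) (x₀ : V) (n : ℕ) :
    (meetingEdges Γ (ballSet Γ x₀ n)).Finite := by
  have hsub : meetingEdges Γ (ballSet Γ x₀ n) ⊆
      ⋃ x ∈ ballSet Γ x₀ n, Γ.incidenceSet x := by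
    rintro e ⟨he, x, hx, hxe⟩
    exact Set.mem_biUnion hx ⟨he, hxe⟩
  refine Set.Finite.subset (Set.Finite.biUnion (ball_finite hΓ x₀ n) fun x _ => ?_) hsub
  classical
  haveI hfn : Finite (Γ.neighborSet x) := (nbr_finite hΓ x).to_subtype
  haveI : Finite (Γ.incidenceSet x) := Finite.of_equiv _ (Γ.incidenceSetEquivNeighborSet x).symm
  exact Set.toFinite _

end Fin

section Struct
variable {V : Type*} {Γ : SimpleGraph V} {x₀ : V} {n : ℕ}

lemma comp_closure {σ : V → ℤ} {C : Set V} (hcomp : IsCompOf Γ {x | σ x = -1} C)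
    {x : V} (hx : x ∉ outerBoundary Γ C) {y : V} (hy : y ∈ C) (hadj : Γ.Adj x y) :
    x ∈ C := by
  by_contra hxC
  exact hx ⟨hxC, y, hy, hadj⟩

lemma comp_sigma_eq_neg_one {σ : V → ℤ} {C : Set V} (hcomp : IsCompOf Γ {x | σ x = -1} C)
    {x : V} (hx : x ∈ C) : σ x = -1 := hcomp.1 hx

lemma boundary_sigma_eq_one {σ : V → ℤ} (hσ : σ ∈ OmegaBC Γ x₀ n 1) {C : Set V}
    (hcomp : IsCompOf Γ {x | σ x = -1} C) {x : V} (hx : x ∈ outerBoundary Γ C) :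
    σ x = 1 := by
  obtain ⟨hxC, y, hy, hadj⟩ := hx
  rcases hσ.1 x with h | h
  · exact h
  · exact absurd (hcomp.2.2.2 x h y hy hadj) hxC

lemma comp_subset_ball {σ : V → ℤ} (hσ : σ ∈ OmegaBC Γ x₀ n 1) {C : Set V}
    (hcomp : IsCompOf Γ {x | σ x = -1} C) : C ⊆ ballSet Γ x₀ n := by
  intro x hx
  by_contra hxb
  have h1 : σ x = 1 := hσ.2 x hxb
  have h2 : σ x = -1 := hcomp.1 hx
  omega

lemma gamma_finite (hΓ : IsCayleyTree2 Γ) {σ : V → ℤ} (hσ : σ ∈ OmegaBC Γ x₀ n 1)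
    {C : Set V} (hcomp : IsCompOf Γ {x | σ x = -1} C) :
    (outerBoundary Γ C).Finite := by
  have hCfin : C.Finite := (ball_finite hΓ x₀ n).subset (comp_subset_ball hσ hcomp)
  have hsub : outerBoundary Γ C ⊆ ⋃ y ∈ C, Γ.neighborSet y := by
    rintro x ⟨hxC, y, hy, hadj⟩
    exact Set.mem_biUnion hy hadj.symm
  exact Set.Finite.subset (Set.Finite.biUnion hCfin fun y _ => nbr_finite hΓ y) hsub

/-- A walk whose support lies in C₁, with an endpoint in C₂, transfers membership. -/
lemma mem_comp_of_walk {C₁ C₂ γ : Set V}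
    (h1γ : C₁ ∩ γ = ∅)
    (h2cl : ∀ x ∉ γ, ∀ y ∈ C₂, Γ.Adj x y → x ∈ C₂) :
    ∀ {z x : V} (p : Γ.Walk z x), (∀ s ∈ p.support, s ∈ C₁) → z ∈ C₂ → x ∈ C₂ := by
  intro z x p
  induction p with
  | nil => exact fun _ hz => hz
  | @cons u v w h q ih =>
    intro hsup hz
    have hv : v ∈ C₁ := hsup v (by simp [SimpleGraph.Walk.support_cons])
    have hvγ : v ∉ γ := fun hg => by
      have : v ∈ C₁ ∩ γ := ⟨hv, hg⟩
      simp [h1γ] at this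
    have hv2 : v ∈ C₂ := h2cl v hvγ u hz h.symm
    exact ih (fun s hs => hsup s (by simp [SimpleGraph.Walk.support_cons, hs])) hv2

/-- Two connected components of the complement of γ with outer boundary exactly γ
(with at least two boundary points) coincide, in a tree. -/
lemma comps_eq (hac : Γ.IsAcyclic) {γ C₁ C₂ : Set V}
    (h1conn : (Γ.induce C₁).Connected) (h2conn : (Γ.induce C₂).Connected)
    (h1cl : ∀ x ∉ γ, ∀ y ∈ C₁, Γ.Adj x y → x ∈ C₁)
    (h2cl : ∀ x ∉ γ, ∀ y ∈ C₂, Γ.Adj x y → x ∈ C₂)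
    (hb1 : outerBoundary Γ C₁ = γ) (hb2 : outerBoundary Γ C₂ = γ)
    {a b : V} (ha : a ∈ γ) (hb : b ∈ γ) (hab : a ≠ b) : C₁ = C₂ := by
  classical
  have h1γ : C₁ ∩ γ = ∅ := by
    rw [← hb1]
    ext x
    simp only [Set.mem_inter_iff, Set.mem_empty_iff_false, iff_false, not_and]
    exact fun hx hbd => hbd.1 hx
  have h2γ : C₂ ∩ γ = ∅ := by
    rw [← hb2]
    ext x
    simp only [Set.mem_inter_iff, Set.mem_empty_iff_false, iff_false, not_and]
    exact fun hx hbd => hbd.1 hx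
  by_cases hint : ∃ z, z ∈ C₁ ∧ z ∈ C₂
  · obtain ⟨z, hz1, hz2⟩ := hint
    apply Set.eq_of_subset_of_subset
    · intro x hx
      obtain ⟨p, hp⟩ := walk_in_set h1conn hz1 hx
      exact mem_comp_of_walk h1γ h2cl p hp hz2
    · intro x hx
      obtain ⟨p, hp⟩ := walk_in_set h2conn hz2 hx
      exact mem_comp_of_walk h2γ h1cl p hp hz1
  · exfalso
    push_neg at hint
    -- get neighbors of a and b in each component
    have haC₁ : a ∈ outerBoundary Γ C₁ := hb1 ▸ ha
    have haC₂ : a ∈ outerBoundary Γ C₂ := hb2 ▸ ha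
    have hbC₁ : b ∈ outerBoundary Γ C₁ := hb1 ▸ hb
    have hbC₂ : b ∈ outerBoundary Γ C₂ := hb2 ▸ hb
    obtain ⟨haC₁', u₁, hu₁, hau₁⟩ := haC₁
    obtain ⟨haC₂', u₂, hu₂, hau₂⟩ := haC₂
    obtain ⟨hbC₁', v₁, hv₁, hbv₁⟩ := hbC₁
    obtain ⟨hbC₂', v₂, hv₂, hbv₂⟩ := hbC₂
    have hmkpath : ∀ (C : Set V), (Γ.induce C).Connected → C ∩ γ = ∅ →
        ∀ u v : V, u ∈ C → v ∈ C → Γ.Adj a u → Γ.Adj b v → a ∉ C → b ∉ C →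
        ∃ w : Γ.Walk a b, w.IsPath ∧ u ∈ w.support ∧
          (∀ s ∈ w.support, s = a ∨ s = b ∨ s ∈ C) := by
      intro C hconn hCγ u v hu hv hau hbv haC hbC
      have hconcat : ∀ (l : List V) (x s : V), s ∈ l ++ [x] ↔ s ∈ l ∨ s = x := by
        intro l x s; simp
      obtain ⟨q, hq⟩ := walk_in_set hconn hu hv
      set r := q.toPath.1 with hr
      have hrs : ∀ s ∈ r.support, s ∈ C := fun s hs =>
        hq s (SimpleGraph.Walk.support_toPath_subset q hs)
      have hbr : b ∉ r.support := fun hmem => hbC (hrs b hmem)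
      have hcr : (r.concat hbv.symm).IsPath := isPath_concat q.toPath.2 hbv.symm hbr
      have har : a ∉ (r.concat hbv.symm).support := by
        rw [SimpleGraph.Walk.support_concat]
        intro hmem
        rcases (hconcat _ _ _).mp hmem with hmem | hmem
        · exact haC (hrs a hmem)
        · exact hab hmem
      refine ⟨SimpleGraph.Walk.cons hau (r.concat hbv.symm), hcr.cons har, ?_, ?_⟩
      · rw [SimpleGraph.Walk.support_cons]
        refine List.mem_cons_of_mem _ ?_
        rw [SimpleGraph.Walk.support_concat, hconcat]
        exact Or.inl r.start_mem_support
      intro s hs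
      rw [SimpleGraph.Walk.support_cons] at hs
      rcases List.mem_cons.mp hs with rfl | hs
      · exact Or.inl rfl
      · rw [SimpleGraph.Walk.support_concat, hconcat] at hs
        rcases hs with hs | hs
        · exact Or.inr (Or.inr (hrs s hs))
        · exact Or.inr (Or.inl hs)
    obtain ⟨w₁, hw₁, hu₁w₁, hws₁⟩ := hmkpath C₁ h1conn h1γ u₁ v₁ hu₁ hv₁ hau₁ hbv₁ haC₁' hbC₁'
    obtain ⟨w₂, hw₂, hu₂w₂, hws₂⟩ := hmkpath C₂ h2conn h2γ u₂ v₂ hu₂ hv₂ hau₂ hbv₂ haC₂' hbC₂'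
    have := hac.path_unique ⟨w₁, hw₁⟩ ⟨w₂, hw₂⟩
    have hweq : w₁ = w₂ := congrArg Subtype.val this
    have hu₁w : u₁ ∈ w₂.support := hweq ▸ hu₁w₁
    rcases hws₂ u₁ hu₁w with h | h | h
    · exact hau₁.ne h.symm
    · have : b ∈ C₁ ∩ γ := ⟨h ▸ hu₁, hb⟩
      simp [h1γ] at this
    · exact hint u₁ hu₁ h

/-- no contour consisting of a single vertex -/
lemma no_singleton_contour (hΓ : IsCayleyTree2 Γ) {σ : V → ℤ} (hσ : σ ∈ OmegaBC Γ x₀ n 1)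
    {C : Set V} (hcomp : IsCompOf Γ {x | σ x = -1} C) {g : V}
    (hbd : outerBoundary Γ C = {g}) : False := by
  have hCfin : C.Finite := (ball_finite hΓ x₀ n).subset (comp_subset_ball hσ hcomp)
  refine min_degree_two_infinite hΓ.1 hΓ.2.1 hCfin hcomp.2.1 ?_
  intro c hc
  have hnfin : (Γ.neighborSet c).Finite := nbr_finite hΓ c
  have hnsub : Γ.neighborSet c ⊆ C ∪ {g} := by
    intro y hy
    by_cases hyC : y ∈ C
    · exact Or.inl hyC
    · have : y ∈ outerBoundary Γ C := ⟨hyC, c, hc, hy.symm⟩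
      rw [hbd] at this
      exact Or.inr this
  have hsfin : (Γ.neighborSet c \ {g}).Finite := hnfin.diff
  have hcard : 1 < (Γ.neighborSet c \ {g}).ncard := by
    have h1 : Γ.neighborSet c ⊆ (Γ.neighborSet c \ {g}) ∪ {g} := by
      intro y hy
      by_cases hyg : y = g
      · exact Or.inr hyg
      · exact Or.inl ⟨hy, hyg⟩
    have h2 : (Γ.neighborSet c).ncard ≤ ((Γ.neighborSet c \ {g}) ∪ {g}).ncard :=
      Set.ncard_le_ncard h1 (hsfin.union (Set.finite_singleton g))
    have h3 : ((Γ.neighborSet c \ {g}) ∪ {g}).ncard ≤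
        (Γ.neighborSet c \ {g}).ncard + ({g} : Set V).ncard := Set.ncard_union_le _ _
    rw [hΓ.2.2 c] at h2
    rw [Set.ncard_singleton] at h3
    omega
  obtain ⟨y₁, y₂, hy₁, hy₂, hne⟩ := (Set.one_lt_ncard_iff hsfin).mp hcard
  have hy₁C : y₁ ∈ C := by
    rcases hnsub hy₁.1 with h | h
    · exact h
    · exact absurd h hy₁.2
  have hy₂C : y₂ ∈ C := by
    rcases hnsub hy₂.1 with h | h
    · exact h
    · exact absurd h hy₂.2
  exact ⟨y₁, y₂, hne, hy₁C, hy₂C, hy₁.1, hy₂.1⟩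

-- Energy identity: flipping the component C to plus lowers the energy by 2|∂C|.
open scoped Classical in
lemma energy_flip (hΓ : IsCayleyTree2 Γ) {σ : V → ℤ} (hσ : σ ∈ OmegaBC Γ x₀ n 1)
    {C : Set V} (hcomp : IsCompOf Γ {x | σ x = -1} C) :
    isingH Γ x₀ n σ =
      isingH Γ x₀ n (fun x => if x ∈ C then 1 else σ x) +
        2 * ((outerBoundary Γ C).ncard : ℤ) := by
  classical
  set σ' : V → ℤ := fun x => if x ∈ C then 1 else σ x with hσ'def
  set γ := outerBoundary Γ C with hγdef
  have hγfin : γ.Finite := gamma_finite hΓ hσ hcomp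
  have hMfin := meetingEdges_finite hΓ x₀ n
  have hCball := comp_subset_ball hσ hcomp
  have hγC : ∀ x ∈ γ, x ∉ C := fun x hx => hx.1
  have hex : ∀ x ∈ γ, ∃ y, y ∈ C ∧ Γ.Adj x y := fun x hx => hx.2
  choose! f hfC hfadj using hex
  set t : (V → ℤ) → Sym2 V → ℤ :=
    fun τ => Sym2.lift ⟨fun x y => τ x * τ y, fun x y => mul_comm (τ x) (τ y)⟩ with htdef
  set M := hMfin.toFinset with hMdef
  set F := hγfin.toFinset.image (fun x => s(x, f x)) with hFdef
  have hFM : F ⊆ M := by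
    intro e he
    rw [hFdef, Finset.mem_image] at he
    obtain ⟨x, hx, rfl⟩ := he
    rw [Set.Finite.mem_toFinset] at hx
    rw [hMdef, Set.Finite.mem_toFinset]
    exact ⟨(Γ.mem_edgeSet).mpr (hfadj x hx), f x, hCball (hfC x hx), by simp⟩
  have hdiff0 : ∀ e ∈ M, e ∉ F → t σ' e - t σ e = 0 := by
    intro e
    induction e using Sym2.ind with
    | _ x y =>
      intro heM heF
      have hadj : Γ.Adj x y := ((Set.Finite.mem_toFinset _).mp heM).1
      simp only [htdef, Sym2.lift_mk]
      by_cases hx : x ∈ C <;> by_cases hy : y ∈ C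
      · have h1 : σ x = -1 := hcomp.1 hx
        have h2 : σ y = -1 := hcomp.1 hy
        simp [hσ'def, hx, hy, h1, h2]
      · exfalso
        have hyγ : y ∈ γ := ⟨hy, x, hx, hadj.symm⟩
        have : x = f y := unique_nbr_in_comp hΓ.2.1 hcomp.2.2.1 hy hx (hfC y hyγ)
          hadj.symm (hfadj y hyγ)
        apply heF
        rw [hFdef, Finset.mem_image]
        exact ⟨y, (Set.Finite.mem_toFinset _).mpr hyγ, by rw [← this, Sym2.eq_swap]⟩
      · exfalso
        have hxγ : x ∈ γ := ⟨hx, y, hy, hadj⟩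
        have : y = f x := unique_nbr_in_comp hΓ.2.1 hcomp.2.2.1 hx hy (hfC x hxγ)
          hadj (hfadj x hxγ)
        apply heF
        rw [hFdef, Finset.mem_image]
        exact ⟨x, (Set.Finite.mem_toFinset _).mpr hxγ, by rw [← this]⟩
      · simp [hσ'def, hx, hy]
  have hdiff2 : ∀ e ∈ F, t σ' e - t σ e = 2 := by
    intro e he
    rw [hFdef, Finset.mem_image] at he
    obtain ⟨x, hx, rfl⟩ := he
    rw [Set.Finite.mem_toFinset] at hx
    have h1 : σ x = 1 := boundary_sigma_eq_one hσ hcomp hx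
    have h2 : σ (f x) = -1 := hcomp.1 (hfC x hx)
    have h3 : x ∉ C := hγC x hx
    simp only [htdef, Sym2.lift_mk]
    simp [hσ'def, h3, hfC x hx, h1, h2]
  have hinj : Set.InjOn (fun x => s(x, f x)) hγfin.toFinset := by
    intro x₁ h₁ x₂ h₂ heq
    rw [Finset.mem_coe, Set.Finite.mem_toFinset] at h₁ h₂
    simp only [Sym2.eq_iff] at heq
    rcases heq with ⟨h, -⟩ | ⟨h, h'⟩
    · exact h
    · exact absurd (h ▸ hfC x₂ h₂) (hγC x₁ h₁)
  have hcardF : F.card = γ.ncard := by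
    rw [hFdef, Finset.card_image_of_injOn hinj]
    exact (Set.ncard_eq_toFinset_card _ hγfin).symm
  have hsum : ∑ e ∈ M, (t σ' e - t σ e) = 2 * (γ.ncard : ℤ) := by
    rw [← Finset.sum_subset hFM (fun e heM heF => hdiff0 e heM heF)]
    rw [Finset.sum_congr rfl (fun e heF => hdiff2 e heF), Finset.sum_const, hcardF]
    push_cast
    ring
  have hsum' : ∑ e ∈ M, t σ' e - ∑ e ∈ M, t σ e = 2 * (γ.ncard : ℤ) := by
    rw [← Finset.sum_sub_distrib]
    exact hsum
  have h1 : isingH Γ x₀ n σ = -∑ e ∈ M, t σ e := by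
    rw [isingH, finsum_mem_eq_finite_toFinset_sum _ hMfin]
  have h2 : isingH Γ x₀ n σ' = -∑ e ∈ M, t σ' e := by
    rw [isingH, finsum_mem_eq_finite_toFinset_sum _ hMfin]
  have h2' : isingH Γ x₀ n (fun x => if x ∈ C then 1 else σ x) = -∑ e ∈ M, t σ' e := h2
  rw [h1, h2']
  linarith

end Struct


/-- Peierls contour bound: under the finite-volume Gibbs measure with all-plus boundary
condition, the probability that a fixed finite set `γ` occurs as a contour (the outer
boundary of a connected component of the minus-region) is at most `exp(−2β|γ|)`. -/
theorem contour_probability_bound {V : Type*} (Γ : SimpleGraph V) (hΓ : IsCayleyTree2 Γ)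
    (x₀ : V) (n : ℕ) (hn : 1 ≤ n) (β : ℝ) (hβ : 0 < β) (γ : Set V) (hγ : γ.Finite) :
    gibbs Γ x₀ n β 1
        {σ | ∃ C : Set V, IsCompOf Γ {x | σ x = -1} C ∧ outerBoundary Γ C = γ} ≤
      Real.exp (-2 * β * (γ.ncard : ℝ)) := by
  classical
  set E : Set (V → ℤ) :=
    {σ | ∃ C : Set V, IsCompOf Γ {x | σ x = -1} C ∧ outerBoundary Γ C = γ} with hEdef
  set Ω := OmegaBC Γ x₀ n 1 with hΩdef
  have hΩfin : Ω.Finite := omega_finite hΓ x₀ n 1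
  have hE'fin : (E ∩ Ω).Finite := hΩfin.subset Set.inter_subset_right
  set w : (V → ℤ) → ℝ := fun σ => Real.exp (-β * (isingH Γ x₀ n σ : ℝ)) with hwdef
  have hpos : (0:ℝ) < ∑ σ ∈ hΩfin.toFinset, w σ := by
    refine Finset.sum_pos (fun σ _ => Real.exp_pos _) ⟨fun _ => 1, ?_⟩
    rw [Set.Finite.mem_toFinset]
    exact ⟨fun x => Or.inl rfl, fun x _ => rfl⟩
  have hgibbs : gibbs Γ x₀ n β 1 E =
      (∑ σ ∈ hE'fin.toFinset, w σ) / ∑ σ ∈ hΩfin.toFinset, w σ := by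
    rw [gibbs, finsum_mem_eq_finite_toFinset_sum _ hE'fin,
      finsum_mem_eq_finite_toFinset_sum _ hΩfin]
  rw [hgibbs, div_le_iff₀ hpos]
  -- trivial case: empty event
  by_cases hE' : E ∩ Ω = ∅
  · have : hE'fin.toFinset = ∅ := by simp [hE']
    rw [this, Finset.sum_empty]
    exact le_of_lt (mul_pos (Real.exp_pos _) hpos)
  by_cases h0 : γ.ncard = 0
  · -- bound is 1 : trivial
    have hsub : hE'fin.toFinset ⊆ hΩfin.toFinset := by
      intro σ hσ
      rw [Set.Finite.mem_toFinset] at *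
      exact hσ.2
    have h1 : (∑ σ ∈ hE'fin.toFinset, w σ) ≤ ∑ σ ∈ hΩfin.toFinset, w σ :=
      Finset.sum_le_sum_of_subset_of_nonneg hsub
        (fun σ _ _ => le_of_lt (Real.exp_pos _))
    have : Real.exp (-2 * β * (γ.ncard : ℝ)) = 1 := by
      rw [h0]; simp
    rw [this, one_mul]
    exact h1
  by_cases h1 : γ.ncard = 1
  · exfalso
    obtain ⟨g, hg⟩ := (Set.ncard_eq_one).mp h1
    obtain ⟨σ, hσE, hσΩ⟩ := Set.nonempty_iff_ne_empty.mpr hE'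
    obtain ⟨C, hcomp, hbd⟩ := hσE
    exact no_singleton_contour hΓ hσΩ hcomp (by rw [hbd, hg])
  -- main case : at least two boundary vertices
  have hcard2 : 1 < γ.ncard := by omega
  obtain ⟨a, b, ha, hb, hab⟩ := (Set.one_lt_ncard_iff hγ).mp hcard2
  obtain ⟨σ₀, hσ₀E, hσ₀Ω⟩ := Set.nonempty_iff_ne_empty.mpr hE'
  obtain ⟨C₀, hcomp₀, hbd₀⟩ := hσ₀E
  have hC₀ball : C₀ ⊆ ballSet Γ x₀ n := comp_subset_ball hσ₀Ω hcomp₀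
  have hCeq : ∀ σ, σ ∈ E ∩ Ω → ∀ C : Set V, IsCompOf Γ {x | σ x = -1} C →
      outerBoundary Γ C = γ → C = C₀ := by
    intro σ hσ C hcomp hbd
    refine comps_eq hΓ.2.1 hcomp.2.2.1 hcomp₀.2.2.1 ?_ ?_ hbd hbd₀ ha hb hab
    · intro x hx y hy hadj
      exact comp_closure hcomp (hbd ▸ hx) hy hadj
    · intro x hx y hy hadj
      exact comp_closure hcomp₀ (hbd₀ ▸ hx) hy hadj
  set Φ : (V → ℤ) → (V → ℤ) := fun σ x => if x ∈ C₀ then 1 else σ x with hΦdef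
  have hneg : ∀ σ ∈ E ∩ Ω, ∀ x ∈ C₀, σ x = -1 := by
    intro σ hσ x hx
    obtain ⟨C, hcomp, hbd⟩ := hσ.1
    have hC := hCeq σ hσ C hcomp hbd
    exact hcomp.1 (by rw [hC]; exact hx)
  have hflipΩ : ∀ σ ∈ E ∩ Ω, Φ σ ∈ Ω := by
    intro σ hσ
    constructor
    · intro x
      by_cases hx : x ∈ C₀
      · left; simp [hΦdef, hx]
      · simp only [hΦdef, hx, if_neg, not_false_iff]
        exact hσ.2.1 x
    · intro x hx
      have hxC : x ∉ C₀ := fun h => hx (hC₀ball h)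
      simp only [hΦdef, hxC, if_neg, not_false_iff]
      exact hσ.2.2 x hx
  have hw : ∀ σ ∈ E ∩ Ω, w σ = Real.exp (-2 * β * (γ.ncard : ℝ)) * w (Φ σ) := by
    intro σ hσ
    obtain ⟨C, hcomp, hbd⟩ := hσ.1
    have hC := hCeq σ hσ C hcomp hbd
    subst hC
    have hE := energy_flip hΓ hσ.2 hcomp
    have hE' : isingH Γ x₀ n σ = isingH Γ x₀ n (Φ σ) + 2 * ((γ : Set V).ncard : ℤ) := by
      rw [← hbd]
      exact hE
    simp only [hwdef]
    rw [hE']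
    rw [← Real.exp_add]
    congr 1
    push_cast
    ring
  have hinjF : ∀ σ₁ ∈ hE'fin.toFinset, ∀ σ₂ ∈ hE'fin.toFinset, Φ σ₁ = Φ σ₂ → σ₁ = σ₂ := by
    intro σ₁ h₁ σ₂ h₂ heq
    rw [Set.Finite.mem_toFinset] at h₁ h₂
    funext x
    by_cases hx : x ∈ C₀
    · rw [hneg σ₁ h₁ x hx, hneg σ₂ h₂ x hx]
    · have := congrFun heq x
      simpa [hΦdef, hx] using this
  have himg : (hE'fin.toFinset).image Φ ⊆ hΩfin.toFinset := by
    intro τ hτ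
    rw [Finset.mem_image] at hτ
    obtain ⟨σ, hσ, rfl⟩ := hτ
    rw [Set.Finite.mem_toFinset] at hσ ⊢
    exact hflipΩ σ hσ
  calc ∑ σ ∈ hE'fin.toFinset, w σ
      = ∑ σ ∈ hE'fin.toFinset, Real.exp (-2 * β * (γ.ncard : ℝ)) * w (Φ σ) := by
        refine Finset.sum_congr rfl fun σ hσ => hw σ ?_
        rwa [Set.Finite.mem_toFinset] at hσ
    _ = Real.exp (-2 * β * (γ.ncard : ℝ)) * ∑ σ ∈ hE'fin.toFinset, w (Φ σ) := by
        rw [Finset.mul_sum]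
    _ = Real.exp (-2 * β * (γ.ncard : ℝ)) * ∑ τ ∈ (hE'fin.toFinset).image Φ, w τ := by
        rw [Finset.sum_image hinjF]
    _ ≤ Real.exp (-2 * β * (γ.ncard : ℝ)) * ∑ σ ∈ hΩfin.toFinset, w σ := by
        refine mul_le_mul_of_nonneg_left ?_ (le_of_lt (Real.exp_pos _))
        exact Finset.sum_le_sum_of_subset_of_nonneg himg
          (fun σ _ _ => le_of_lt (Real.exp_pos _))
end

section
/- Let Γ = (V, E) be a Cayley tree of order 2 and fix a vertex t ∈ V. For every integer r ≥ 1, the number N_t(r) of distinct sets γ ⊆ V such that γ = ∂C for some finite nonempty connected set C ⊆ V, t ∈ γ, and |γ| = r, satisfies N_t(r) ≤ 12^{2r−1}. -/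
open SimpleGraph

section Aux

variable {V : Type*} {Γ : SimpleGraph V} {C : Set V}


/-- The inclusion homomorphism from an induced subgraph. -/
def inducedHom (Γ : SimpleGraph V) (C : Set V) : Γ.induce C →g Γ :=
  ⟨Subtype.val, fun h => h⟩

/-- From a walk in an induced subgraph, get a walk in the big graph with support in `C`. -/
lemma exists_walk_of_induce {C : Set V} {a b : C} (w : (Γ.induce C).Walk a b) :
    ∃ w' : Γ.Walk a b, w'.support = w.support.map Subtype.val ∧ w'.length = w.length :=
  ⟨w.map (inducedHom Γ C), w.support_map _, w.length_map _⟩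

/-- In a connected induced subgraph there is a path between any two vertices staying in `C`. -/
lemma exists_path_in (hC : (Γ.induce C).Connected) {c₁ c₂ : V} (h₁ : c₁ ∈ C) (h₂ : c₂ ∈ C) :
    ∃ p : Γ.Walk c₁ c₂, p.IsPath ∧ ∀ z ∈ p.support, z ∈ C := by
  obtain ⟨w⟩ := hC.preconnected ⟨c₁, h₁⟩ ⟨c₂, h₂⟩
  classical
  obtain ⟨w', hsup, _⟩ := exists_walk_of_induce (w.toPath.val)
  refine ⟨w', ?_, ?_⟩
  · rw [Walk.isPath_def, hsup]
    exact (w.toPath.2.support_nodup).map Subtype.val_injective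
  · intro z hz
    rw [hsup] at hz
    obtain ⟨⟨z', hz'⟩, _, rfl⟩ := List.mem_map.mp hz
    exact hz'

/-- L1: a vertex outside a connected set in an acyclic graph has at most one neighbor inside. -/
lemma unique_nbr (hac : Γ.IsAcyclic) (hC : (Γ.induce C).Connected) {x c₁ c₂ : V}
    (hx : x ∉ C) (h₁ : c₁ ∈ C) (h₂ : c₂ ∈ C) (a₁ : Γ.Adj x c₁) (a₂ : Γ.Adj x c₂) :
    c₁ = c₂ := by
  by_contra hne
  obtain ⟨p, hp, hpC⟩ := exists_path_in hC h₁ h₂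
  have hxp : x ∉ p.support := fun h => hx (hpC x h)
  have hP₁ : (Walk.cons a₁ p).IsPath := hp.cons hxp
  have hP₂ : (Walk.cons a₂ (Walk.nil : Γ.Walk c₂ c₂)).IsPath :=
    Walk.IsPath.nil.cons (by simp [a₂.ne])
  have heq := (isAcyclic_iff_path_unique.mp hac) ⟨Walk.cons a₁ p, hP₁⟩ ⟨Walk.cons a₂ Walk.nil, hP₂⟩
  have hlen := congrArg (fun q : Γ.Path x c₂ => (q : Γ.Walk x c₂).length) heq
  simp only [Walk.length_cons, Walk.length_nil] at hlen
  have h0 : p.length = 0 := by omega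
  exact hne ((Walk.nil_iff_length_eq.mpr h0).eq)

/-- Reachability in induced subgraph from a walk avoiding the complement. -/
lemma reachable_induce_of_walk {s : Set V} :
    ∀ {a b : V} (w : Γ.Walk a b) (hs : ∀ z ∈ w.support, z ∈ s),
      (Γ.induce s).Reachable ⟨a, hs a w.start_mem_support⟩ ⟨b, hs b w.end_mem_support⟩ := by
  intro a b w
  induction w with
  | nil => intro hs; rfl
  | @cons u x b h p ih =>
      intro hs
      have hx : x ∈ s := hs x (by simp [Walk.support_cons])
      have hs' : ∀ z ∈ p.support, z ∈ s := fun z hz => hs z (by simp [Walk.support_cons, hz])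
      have hu : u ∈ s := hs u (by simp [Walk.support_cons])
      have h1 : (Γ.induce s).Adj ⟨u, hu⟩ ⟨x, hx⟩ := h
      exact (h1.reachable).trans (ih hs')

lemma induce_isAcyclic (hac : Γ.IsAcyclic) (C : Set V) : (Γ.induce C).IsAcyclic := by
  intro v c hc
  exact hac (c.map (inducedHom Γ C)) (hc.map Subtype.val_injective)

lemma nbr_finite_s13 (hdeg : ∀ v : V, (Γ.neighborSet v).ncard = 3) (v : V) :
    (Γ.neighborSet v).Finite := by
  by_contra h
  have := Set.Infinite.ncard (h : ¬ (Γ.neighborSet v).Finite)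
  rw [hdeg v] at this; exact three_ne_zero this

lemma boundary_card (hac : Γ.IsAcyclic) (hdeg : ∀ v : V, (Γ.neighborSet v).ncard = 3)
    (hfin : C.Finite) (hne : C.Nonempty) (hC : (Γ.induce C).Connected) :
    (outerBoundary Γ C).Finite ∧ (outerBoundary Γ C).ncard = C.ncard + 2 := by
  classical
  obtain ⟨F, rfl⟩ : ∃ F : Finset V, (↑F : Set V) = C := ⟨hfin.toFinset, hfin.coe_toFinset⟩
  set C : Set V := (↑F : Set V) with hCdef
  -- the boundary as a Finset
  have hnf : ∀ v : V, (Γ.neighborSet v \ C).Finite := fun v => (nbr_finite_s13 hdeg v).diff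
  set B : Finset V := F.biUnion (fun c => (hnf c).toFinset) with hB
  have hBeq : (↑B : Set V) = outerBoundary Γ C := by
    ext x
    simp only [hB, Finset.coe_biUnion, Set.mem_iUnion, Set.Finite.mem_toFinset,
      Set.mem_diff, mem_neighborSet, Finset.mem_coe, outerBoundary, Set.mem_setOf_eq]
    constructor
    · rintro ⟨c, hc, hadj, hxC⟩
      exact ⟨hxC, c, hc, hadj.symm⟩
    · rintro ⟨hxC, c, hc, hadj⟩
      exact ⟨c, hc, hadj.symm, hxC⟩
  -- disjointness
  have hdisj : ∀ c₁ ∈ F, ∀ c₂ ∈ F, c₁ ≠ c₂ →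
      Disjoint ((hnf c₁).toFinset) ((hnf c₂).toFinset) := by
    intro c₁ h₁ c₂ h₂ hne12
    rw [Finset.disjoint_left]
    intro x hx1 hx2
    simp only [Set.Finite.mem_toFinset, Set.mem_diff, mem_neighborSet] at hx1 hx2
    exact hne12 (unique_nbr hac hC hx1.2 h₁ h₂ hx1.1.symm hx2.1.symm)
  have hcard : B.card = ∑ c ∈ F, ((Γ.neighborSet c \ C).ncard) := by
    rw [hB, Finset.card_biUnion hdisj]
    refine Finset.sum_congr rfl fun c _ => ?_
    exact (Set.ncard_eq_toFinset_card _ (hnf c)).symm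
  -- handshake on the induced graph
  letI : Fintype ↥C := FinsetCoe.fintype F
  letI : DecidableRel (Γ.induce C).Adj := Classical.decRel _
  letI : DecidableEq ↥C := Classical.decEq _
  have htree : (Γ.induce C).IsTree := ⟨hC, induce_isAcyclic hac C⟩
  have hedges : (Γ.induce C).edgeFinset.card + 1 = F.card := by
    rw [htree.card_edgeFinset]
    simp [hCdef]
  have hdeg' : ∀ c : ↥C, (Γ.induce C).degree c = (Γ.neighborSet c ∩ C).ncard := by
    intro c
    have himg : Subtype.val '' ((Γ.induce C).neighborSet c) = Γ.neighborSet ↑c ∩ C := by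
      ext z
      simp only [Set.mem_image, mem_neighborSet, Set.mem_inter_iff]
      constructor
      · rintro ⟨⟨z', hz'⟩, hadj, rfl⟩
        exact ⟨hadj, hz'⟩
      · rintro ⟨hadj, hz⟩
        exact ⟨⟨z, hz⟩, hadj, rfl⟩
    rw [← himg, Set.ncard_image_of_injective _ Subtype.val_injective,
      ← card_neighborSet_eq_degree, Set.ncard_eq_toFinset_card', Set.toFinset_card]
  have hhs : ∑ c : ↥C, (Γ.induce C).degree c = 2 * (Γ.induce C).edgeFinset.card :=
    SimpleGraph.sum_degrees_eq_twice_card_edges _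
  have hsum2 : ∑ c ∈ F, (Γ.neighborSet c ∩ C).ncard = 2 * (F.card - 1) := by
    have : ∑ c : ↥C, (Γ.neighborSet ↑c ∩ C).ncard = ∑ c ∈ F, (Γ.neighborSet c ∩ C).ncard := by
      exact Finset.sum_coe_sort F (fun c => (Γ.neighborSet c ∩ C).ncard)
    rw [← this]
    rw [← Finset.sum_congr rfl (fun c _ => hdeg' c)] at *
    rw [hhs]
    omega
  -- each vertex splits its 3 neighbors
  have hsplit : ∀ c ∈ F, (Γ.neighborSet c ∩ C).ncard + (Γ.neighborSet c \ C).ncard = 3 := by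
    intro c _
    rw [Set.ncard_inter_add_ncard_diff_eq_ncard _ _ (nbr_finite_s13 hdeg c), hdeg c]
  have htot : ∑ c ∈ F, ((Γ.neighborSet c ∩ C).ncard + (Γ.neighborSet c \ C).ncard) = 3 * F.card := by
    rw [Finset.sum_congr rfl hsplit]
    simp [Finset.sum_const, mul_comm]
  rw [Finset.sum_add_distrib, hsum2] at htot
  have hF1 : 1 ≤ F.card := Finset.card_pos.mpr (by
    obtain ⟨x, hx⟩ := hne; exact ⟨x, hx⟩)
  have hBcard : B.card = F.card + 2 := by omega
  have hCn : C.ncard = F.card := by simp [hCdef]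
  refine ⟨?_, ?_⟩
  · rw [← hBeq]; exact B.finite_toSet
  · rw [← hBeq, Set.ncard_coe_finset, hBcard, hCn]

/-- Spanning-walk lemma. -/
lemma span_walk : ∀ (n : ℕ) (C : Set V), C.Finite → C.ncard = n → (Γ.induce C).Connected →
    ∀ y, y ∈ C → ∃ x ∈ C, ∃ w : Γ.Walk y x, (∀ z ∈ w.support, z ∈ C) ∧
      (∀ c ∈ C, c ∈ w.support) ∧ w.length + 2 ≤ 2 * n := by
  intro n
  induction n with
  | zero =>
      intro C hfin hcard _ y hy
      rw [Set.ncard_eq_zero hfin] at hcard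
      exact absurd hy (by simp [hcard])
  | succ n ih =>
      intro C hfin hcard hC y hy
      rcases Nat.eq_zero_or_pos n with rfl | hn
      · obtain ⟨a, ha⟩ := Set.ncard_eq_one.mp hcard
        have hya : y = a := by have := hy; rw [ha] at this; simpa using this
        subst hya
        exact ⟨y, hy, Walk.nil, by simp [ha], by simp [ha], by simp⟩
      · classical
        letI : Fintype ↥C := hfin.fintype
        set G' := Γ.induce C with hG'
        have hconn := hC
        set yy : ↥C := ⟨y, hy⟩ with hyy
        obtain ⟨v, -, hvmax⟩ := Finset.exists_max_image (Finset.univ : Finset ↥C)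
          (fun z => G'.dist yy z) ⟨yy, Finset.mem_univ _⟩
        have hvmax : ∀ z : ↥C, G'.dist yy z ≤ G'.dist yy v :=
          fun z => hvmax z (Finset.mem_univ _)
        have hcard2 : 1 < C.ncard := by omega
        obtain ⟨u0, hu0C, hu0⟩ := Set.exists_ne_of_one_lt_ncard hcard2 y
        have hdpos : 0 < G'.dist yy v := by
          refine lt_of_lt_of_le ?_ (hvmax ⟨u0, hu0C⟩)
          exact hconn.pos_dist_of_ne (fun h => hu0 (congrArg Subtype.val h).symm)
        have hvy : v ≠ yy := by
          intro h; rw [h, SimpleGraph.dist_self] at hdpos; exact lt_irrefl _ hdpos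
        -- v has a neighbor u in G'
        obtain ⟨p, hp, hplen⟩ := hconn.exists_path_of_dist yy v
        obtain ⟨u, hadj, q, hq⟩ := Walk.not_nil_iff.mp (by
          rw [Walk.nil_iff_length_eq, Walk.length_reverse]
          omega : ¬ p.reverse.Nil)
        have huv : u ≠ v := hadj.ne'
        -- C' = C minus v
        set C' : Set V := C \ {(v : V)} with hC'
        have hyC' : y ∈ C' := by
          refine ⟨hy, fun h => ?_⟩
          have : y = ↑v := h
          exact hvy (Subtype.ext this.symm)
        have hfin' : C'.Finite := hfin.diff
        have hcard' : C'.ncard = n := by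
          have h1 : (C \ {(v : V)}).ncard + 1 = C.ncard :=
            Set.ncard_diff_singleton_add_one v.2 hfin
          rw [hC']; omega
        -- shortest paths avoid v
        have havoid : ∀ z : ↥C, z ≠ v →
            ∃ p : G'.Walk yy z, (v : V) ∉ p.support.map Subtype.val := by
          intro z hz
          obtain ⟨q, hqp, hqlen⟩ := hconn.exists_path_of_dist yy z
          refine ⟨q, fun hmem => ?_⟩
          have hvsup : v ∈ q.support := by
            obtain ⟨a, hamem, hav⟩ := List.mem_map.mp hmem
            exact (Subtype.ext hav : a = v) ▸ hamem
          have hsplit := congrArg Walk.length (q.take_spec hvsup)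
          rw [Walk.length_append] at hsplit
          have h1 : G'.dist yy v ≤ (q.takeUntil v hvsup).length := SimpleGraph.dist_le _
          have h2 : 1 ≤ (q.dropUntil v hvsup).length := by
            by_contra h
            push_neg at h
            have h0 : (q.dropUntil v hvsup).length = 0 := by omega
            exact hz ((Walk.nil_iff_length_eq.mpr h0).eq).symm
          have h3 := hvmax z
          omega
        -- C' is connected
        have hconn' : (Γ.induce C').Connected := by
          rw [connected_iff]
          refine ⟨fun a b => ?_, ⟨⟨y, hyC'⟩⟩⟩
          have hreach : ∀ z : ↥C', (Γ.induce C').Reachable ⟨y, hyC'⟩ z := by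
            rintro ⟨z, hzC, hzv⟩
            obtain ⟨p', hp'⟩ := havoid ⟨z, hzC⟩
              (fun h => hzv (by simpa using (congrArg Subtype.val h)))
            obtain ⟨w', hw's, _⟩ := exists_walk_of_induce p'
            have hsub : ∀ a ∈ w'.support, a ∈ C' := by
              intro a ha
              rw [hw's] at ha
              obtain ⟨⟨a', ha'⟩, ha'mem, rfl⟩ := List.mem_map.mp ha
              refine ⟨ha', fun h => hp' ?_⟩
              have : a' = ↑v := h
              simpa [this] using List.mem_map_of_mem (f := Subtype.val) ha'mem
            exact reachable_induce_of_walk w' hsub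
          exact (hreach a).symm.trans (hreach b)
        -- apply IH
        obtain ⟨x, hxC', w, hwsub, hwcov, hwlen⟩ := ih C' hfin' hcard' hconn' y hyC'
        -- u ∈ C' and u is on w
        have huC' : (u : V) ∈ C' := ⟨u.2, fun h => huv (Subtype.ext (h : (u:V) = ↑v))⟩
        have husup : (u : V) ∈ w.support := hwcov _ huC'
        have havj : Γ.Adj (u : V) (v : V) := (hadj : Γ.Adj ↑v ↑u).symm
        -- surgery
        set w2 : Γ.Walk y x := (w.takeUntil u husup).append
          (Walk.cons havj (Walk.cons havj.symm (w.dropUntil u husup))) with hw2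
        have hlen2 : w2.length = w.length + 2 := by
          have := congrArg Walk.length (w.take_spec husup)
          rw [Walk.length_append] at this
          simp only [hw2, Walk.length_append, Walk.length_cons]
          omega
        refine ⟨x, (Set.diff_subset hxC' : x ∈ C), w2, ?_, ?_, by omega⟩
        · intro z hz
          rw [hw2, Walk.mem_support_append_iff] at hz
          rcases hz with hz | hz
          · exact (hwsub z ((w.support_takeUntil_subset husup) hz)).1
          · rw [Walk.support_cons, List.mem_cons] at hz
            rcases hz with rfl | hz
            · exact u.2
            rw [Walk.support_cons, List.mem_cons] at hz
            rcases hz with rfl | hz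
            · exact v.2
            · exact (hwsub z ((w.support_dropUntil_subset husup) hz)).1
        · intro c hc
          rw [hw2, Walk.mem_support_append_iff]
          by_cases hcv : c = (v : V)
          · right
            rw [Walk.support_cons, Walk.support_cons]
            simp [hcv]
          · have hcC' : c ∈ C' := ⟨hc, hcv⟩
            have := hwcov c hcC'
            rw [← w.take_spec husup, Walk.mem_support_append_iff] at this
            rcases this with h | h
            · exact Or.inl h
            · right
              rw [Walk.support_cons, Walk.support_cons]
              simp only [List.mem_cons]
              exact Or.inr (Or.inr h)

/-- Walks from `t` of length `ℓ` in a 3-regular graph: at most `3^ℓ` of them. -/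
lemma walk_count (hdeg : ∀ v : V, (Γ.neighborSet v).ncard = 3) (t : V) :
    ∀ ℓ : ℕ, ({p : Σ x : V, Γ.Walk t x | p.2.length = ℓ}).Finite ∧
      ({p : Σ x : V, Γ.Walk t x | p.2.length = ℓ}).ncard ≤ 3 ^ ℓ := by
  intro ℓ
  induction ℓ with
  | zero =>
      have hsub : {p : Σ x : V, Γ.Walk t x | p.2.length = 0} ⊆ {⟨t, Walk.nil⟩} := by
        rintro ⟨x, w⟩ h
        cases w with
        | nil => rfl
        | cons h' q => simp [Walk.length_cons] at h
      refine ⟨Set.Finite.subset (Set.finite_singleton _) hsub, ?_⟩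
      simpa using Set.ncard_le_ncard hsub (Set.finite_singleton _)
  | succ ℓ ih =>
      classical
      obtain ⟨hf, hn⟩ := ih
      set Wl := {p : Σ x : V, Γ.Walk t x | p.2.length = ℓ} with hWl
      -- decomposition of a walk of length ℓ+1
      set recover : ((Σ x : V, Γ.Walk t x) × V) → (Σ x : V, Γ.Walk t x) :=
        fun qx => if h : Γ.Adj qx.1.1 qx.2 then ⟨qx.2, qx.1.2.concat h⟩ else ⟨t, Walk.nil⟩
        with hrec
      have hdec : ∀ p : Σ x : V, Γ.Walk t x, p.2.length = ℓ + 1 →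
          ∃ qx : (Σ x : V, Γ.Walk t x) × V, qx.1 ∈ Wl ∧ qx.2 ∈ Γ.neighborSet qx.1.1 ∧
            p = recover qx := by
        rintro ⟨x, w⟩ hlen
        have hlen' : w.length = ℓ + 1 := hlen
        have hnil : ¬ w.reverse.Nil := by
          rw [Walk.nil_iff_length_eq, Walk.length_reverse]; omega
        obtain ⟨u, h, q, hq⟩ := Walk.not_nil_iff.mp hnil
        have hw : w = q.reverse.concat h.symm := by
          have := congrArg Walk.reverse hq
          rw [Walk.reverse_reverse, Walk.reverse_cons] at this
          exact this
        refine ⟨(⟨u, q.reverse⟩, x), ?_, ?_, ?_⟩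
        · show q.reverse.length = ℓ
          have h2 := congrArg Walk.length hw
          rw [Walk.length_concat, Walk.length_reverse] at h2
          rw [Walk.length_reverse]
          omega
        · exact (h.symm : Γ.Adj u x)
        · rw [hrec]
          beta_reduce
          rw [dif_pos (h.symm : Γ.Adj u x)]
          exact Sigma.ext rfl (heq_of_eq hw)
      -- the target set
      set T : Set ((Σ x : V, Γ.Walk t x) × V) :=
        {qx | qx.1 ∈ Wl ∧ qx.2 ∈ Γ.neighborSet qx.1.1} with hT
      set B : Finset ((Σ x : V, Γ.Walk t x) × V) :=
        hf.toFinset.biUnion (fun q => ({q} : Finset _) ×ˢ (nbr_finite_s13 hdeg q.1).toFinset)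
        with hB
      have hTB : T ⊆ ↑B := by
        rintro ⟨q, x⟩ ⟨hq, hx⟩
        simp only [hB, Finset.coe_biUnion, Set.mem_iUnion, Finset.coe_product,
          Finset.coe_singleton, Set.Finite.coe_toFinset, Set.mem_prod,
          Set.mem_singleton_iff, Set.Finite.mem_toFinset]
        exact ⟨q, hq, rfl, hx⟩
      have hBcard : B.card ≤ 3 ^ ℓ * 3 := by
        refine le_trans (Finset.card_biUnion_le) ?_
        have : ∀ q ∈ hf.toFinset,
            (({q} : Finset (Σ x : V, Γ.Walk t x)) ×ˢ (nbr_finite_s13 hdeg q.1).toFinset).card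
              = 3 := by
          intro q _
          rw [Finset.card_product, Finset.card_singleton, one_mul,
            ← Set.ncard_eq_toFinset_card _ (nbr_finite_s13 hdeg q.1), hdeg]
        rw [Finset.sum_congr rfl this, Finset.sum_const, smul_eq_mul]
        have : hf.toFinset.card ≤ 3 ^ ℓ := by
          rw [← Set.ncard_eq_toFinset_card _ hf]; exact hn
        nlinarith
      -- injection
      set S1 := {p : Σ x : V, Γ.Walk t x | p.2.length = ℓ + 1} with hS1
      set f : (Σ x : V, Γ.Walk t x) → ((Σ x : V, Γ.Walk t x) × V) :=
        fun p => if hp : p.2.length = ℓ + 1 then (hdec p hp).choose else ⟨⟨t, Walk.nil⟩, t⟩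
        with hfdef
      have hmaps : ∀ p ∈ S1, f p ∈ T := by
        intro p hp
        have hp' : p.2.length = ℓ + 1 := hp
        have hsp := (hdec p hp').choose_spec
        simp only [hfdef, dif_pos hp']
        exact ⟨hsp.1, hsp.2.1⟩
      have hinj : Set.InjOn f S1 := by
        intro p₁ h₁ p₂ h₂ hfeq
        have h₁' : p₁.2.length = ℓ + 1 := h₁
        have h₂' : p₂.2.length = ℓ + 1 := h₂
        have hsp₁ := (hdec p₁ h₁').choose_spec
        have hsp₂ := (hdec p₂ h₂').choose_spec
        have p₁eq := hsp₁.2.2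
        have p₂eq := hsp₂.2.2
        simp only [hfdef, dif_pos h₁', dif_pos h₂'] at hfeq
        rw [p₁eq, p₂eq, hfeq]
      have hTfin : T.Finite := Set.Finite.subset B.finite_toSet hTB
      constructor
      · -- finiteness of S1 via injection into finite T
        exact Set.Finite.of_finite_image
          (hTfin.subset (by rintro _ ⟨p, hp, rfl⟩; exact hmaps p hp)) hinj
      · calc S1.ncard ≤ T.ncard := Set.ncard_le_ncard_of_injOn f hmaps hinj hTfin
          _ ≤ B.card := by
              rw [← Set.ncard_coe_finset]; exact Set.ncard_le_ncard hTB B.finite_toSet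
          _ ≤ 3 ^ (ℓ + 1) := by rw [pow_succ]; exact hBcard

lemma walk_count_le (hdeg : ∀ v : V, (Γ.neighborSet v).ncard = 3) (t : V) (L : ℕ) :
    ({p : Σ x : V, Γ.Walk t x | p.2.length ≤ L}).Finite ∧
      ({p : Σ x : V, Γ.Walk t x | p.2.length ≤ L}).ncard ≤ 3 ^ (L + 1) := by
  classical
  set B : Finset (Σ x : V, Γ.Walk t x) :=
    (Finset.range (L + 1)).biUnion (fun ℓ => (walk_count hdeg t ℓ).1.toFinset) with hB
  have hsub : {p : Σ x : V, Γ.Walk t x | p.2.length ≤ L} ⊆ ↑B := by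
    intro p hp
    simp only [hB, Finset.coe_biUnion, Set.mem_iUnion, Finset.mem_coe,
      Finset.mem_range, Set.Finite.mem_toFinset]
    have hp' : p.2.length ≤ L := hp
    exact ⟨p.2.length, by omega, rfl⟩
  have hgeom : ∀ M : ℕ, ∑ ℓ ∈ Finset.range M, 3 ^ ℓ ≤ 3 ^ M := by
    intro M
    induction M with
    | zero => simp
    | succ M ihM =>
        rw [Finset.sum_range_succ, pow_succ]
        omega
  have hcard : B.card ≤ 3 ^ (L + 1) := by
    refine le_trans Finset.card_biUnion_le (le_trans ?_ (hgeom (L + 1)))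
    refine Finset.sum_le_sum fun ℓ _ => ?_
    rw [← Set.ncard_eq_toFinset_card _ (walk_count hdeg t ℓ).1]
    exact (walk_count hdeg t ℓ).2
  refine ⟨Set.Finite.subset B.finite_toSet hsub, ?_⟩
  calc _ ≤ (↑B : Set _).ncard := Set.ncard_le_ncard hsub B.finite_toSet
    _ = B.card := Set.ncard_coe_finset _
    _ ≤ 3 ^ (L + 1) := hcard


end Aux

/-- On a Cayley tree of order 2, the number `N_t(r)` of contours `γ` (outer boundaries of
finite nonempty connected vertex sets) through a fixed vertex `t` with `|γ| = r` is at most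
`12^{2r−1}`. -/
theorem contour_count_bound {V : Type*} (Γ : SimpleGraph V) (hΓ : IsCayleyTree2 Γ)
    (t : V) (r : ℕ) (hr : 1 ≤ r) :
    {γ : Set V | t ∈ γ ∧ γ.ncard = r ∧ ∃ C : Set V, C.Finite ∧ C.Nonempty ∧
        (Γ.induce C).Connected ∧ γ = outerBoundary Γ C}.ncard ≤ 12 ^ (2 * r - 1) := by
  classical
  obtain ⟨hconn, hac, hdeg⟩ := hΓ
  set S := {γ : Set V | t ∈ γ ∧ γ.ncard = r ∧ ∃ C : Set V, C.Finite ∧ C.Nonempty ∧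
      (Γ.induce C).Connected ∧ γ = outerBoundary Γ C} with hS
  have key : ∀ γ ∈ S, ∃ p : Σ x : V, Γ.Walk t x, (p.2.length + 5 ≤ 2 * r) ∧
      γ = outerBoundary Γ {z | z ∈ p.2.support ∧ z ≠ t} := by
    rintro γ ⟨htγ, hcard, C, hfin, hne, hCconn, rfl⟩
    obtain ⟨htC, y, hyC, hty⟩ := htγ
    have hb := boundary_card hac hdeg hfin hne hCconn
    have hr2 : C.ncard + 2 = r := by rw [← hb.2, hcard]
    have hn1 : 1 ≤ C.ncard := (Set.ncard_pos hfin).mpr hne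
    obtain ⟨x, hxC, w, hsub, hcov, hlen⟩ := span_walk C.ncard C hfin rfl hCconn y hyC
    refine ⟨⟨x, Walk.cons hty w⟩, ?_, ?_⟩
    · simp only [Walk.length_cons]; omega
    · have hCeq : {z | z ∈ (Walk.cons hty w).support ∧ z ≠ t} = C := by
        ext z
        simp only [Set.mem_setOf_eq, Walk.support_cons, List.mem_cons]
        constructor
        · rintro ⟨rfl | hz, hzt⟩
          · exact absurd rfl hzt
          · exact hsub z hz
        · intro hz
          exact ⟨Or.inr (hcov z hz), fun h => htC (h ▸ hz)⟩
      rw [hCeq]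
  set f : Set V → Σ x : V, Γ.Walk t x :=
    fun γ => if h : γ ∈ S then (key γ h).choose else ⟨t, Walk.nil⟩ with hf
  have hT := walk_count_le hdeg t (2 * r - 5)
  have hmaps : ∀ γ ∈ S, f γ ∈ {p : Σ x : V, Γ.Walk t x | p.2.length ≤ 2 * r - 5} := by
    intro γ h
    have hsp := (key γ h).choose_spec
    simp only [hf, dif_pos h]
    simp only [Set.mem_setOf_eq]
    omega
  have hinj : Set.InjOn f S := by
    intro γ₁ h₁ γ₂ h₂ hfeq
    have hsp₁ := (key γ₁ h₁).choose_spec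
    have hsp₂ := (key γ₂ h₂).choose_spec
    simp only [hf, dif_pos h₁, dif_pos h₂] at hfeq
    rw [hsp₁.2, hsp₂.2, hfeq]
  calc S.ncard ≤ _ := Set.ncard_le_ncard_of_injOn f hmaps hinj hT.1
    _ ≤ 3 ^ (2 * r - 5 + 1) := hT.2
    _ ≤ 12 ^ (2 * r - 5 + 1) := Nat.pow_le_pow_left (by norm_num) _
    _ ≤ 12 ^ (2 * r - 1) := Nat.pow_le_pow_right (by norm_num) (by omega)
end

section
/- Let Γ = (V, E) be a Cayley tree of order 2, with fixed root x₀ and balls V_n. Then the probability that the root has spin −1 under the finite-volume Gibbs measure with all-plus boundary condition tends to 0 as β → ∞, uniformly in the volume: lim_{β→∞} sup_{n ≥ 1} μ_{n,β}^+ ({σ ∈ Ω_n^+ : σ(x₀) = −1}) = 0. -/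
namespace CayleyAux

open SimpleGraph

variable {V : Type*} [DecidableEq V] {Γ : SimpleGraph V}
/-- depth -/
noncomputable def dep (Γ : SimpleGraph V) (x₀ x : V) : ℕ := Γ.dist x₀ x

section Tree

variable (hc : Γ.Connected) (ha : Γ.IsAcyclic) (x₀ : V)

/-- canonical path between two vertices -/
noncomputable def pth (x y : V) : Γ.Path x y := ((hc.preconnected x y).some).toPath

/-- canonical walk from root -/
noncomputable def Pw (x : V) : Γ.Walk x₀ x := (pth hc x₀ x).1

lemma Pw_isPath (x : V) : (Pw hc x₀ x).IsPath := (pth hc x₀ x).2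

/-- ancestor at depth i -/
noncomputable def anc (x : V) (i : ℕ) : V := (Pw hc x₀ x).getVert i

lemma anc_zero (x : V) : anc hc x₀ x 0 = x₀ := Walk.getVert_zero _

/-- parent -/
noncomputable def par (x : V) : V := anc hc x₀ x (dep Γ x₀ x - 1)

lemma dep_x₀ : dep Γ x₀ x₀ = 0 := SimpleGraph.dist_self

lemma dist_le_one_of_adj {x y : V} (h : Γ.Adj x y) : Γ.dist x y ≤ 1 := by
  simpa using SimpleGraph.dist_le (Walk.cons h Walk.nil)

include hc in
lemma dep_eq_zero_iff {x : V} : dep Γ x₀ x = 0 ↔ x = x₀ := by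
  rw [dep, hc.dist_eq_zero_iff]; exact eq_comm

include hc in
lemma dep_le_succ_of_adj {x y : V} (h : Γ.Adj x y) : dep Γ x₀ y ≤ dep Γ x₀ x + 1 := by
  refine le_trans (hc.dist_triangle (v := x)) ?_
  exact Nat.add_le_add_left (dist_le_one_of_adj h) _

include hc in
lemma dep_pos {x : V} (hx : x ≠ x₀) : 1 ≤ dep Γ x₀ x := by
  rcases Nat.eq_zero_or_pos (dep Γ x₀ x) with h | h
  · exact absurd ((dep_eq_zero_iff hc x₀).1 h) hx
  · exact h

include hc in
lemma par_x₀ : par hc x₀ x₀ = x₀ := by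
  rw [par, dep_x₀]; exact anc_zero hc x₀ x₀

include hc ha

lemma walk_eq_pth {x y : V} (w : Γ.Walk x y) (hw : w.IsPath) : w = (pth hc x y).1 :=
  congrArg Subtype.val (ha.path_unique ⟨w, hw⟩ (pth hc x y))

lemma length_pth (x y : V) : ((pth hc x y).1).length = Γ.dist x y := by
  obtain ⟨w, hw⟩ := hc.exists_walk_length_eq_dist x y
  refine le_antisymm ?_ (SimpleGraph.dist_le _)
  have h1 : (pth hc x y).1 = w.bypass := (walk_eq_pth hc ha w.bypass w.bypass_isPath).symm
  rw [h1]
  exact le_trans (Walk.length_bypass_le w) (le_of_eq hw)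

lemma length_Pw (x : V) : (Pw hc x₀ x).length = dep Γ x₀ x := by
  exact length_pth hc ha x₀ x

lemma anc_last (x : V) : anc hc x₀ x (dep Γ x₀ x) = x := by
  rw [anc, ← length_Pw hc ha x₀ x]; exact Walk.getVert_length _

lemma adj_anc {x : V} {i : ℕ} (hi : i < dep Γ x₀ x) :
    Γ.Adj (anc hc x₀ x i) (anc hc x₀ x (i + 1)) := by
  apply Walk.adj_getVert_succ
  rwa [length_Pw hc ha]

lemma dep_anc {x : V} {i : ℕ} (hi : i ≤ dep Γ x₀ x) : dep Γ x₀ (anc hc x₀ x i) = i := by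
  have hub : ∀ j : ℕ, j ≤ dep Γ x₀ x → dep Γ x₀ (anc hc x₀ x j) ≤ j := by
    intro j
    induction j with
    | zero => intro _; rw [anc_zero, dep_x₀]
    | succ k ih =>
      intro hk
      have h1 : dep Γ x₀ (anc hc x₀ x k) ≤ k := ih (le_of_lt (Nat.lt_of_succ_le hk))
      have h2 := dep_le_succ_of_adj hc x₀ (adj_anc hc ha x₀ (Nat.lt_of_succ_le hk))
      omega
  have hlb : ∀ k j : ℕ, j + k = dep Γ x₀ x → dep Γ x₀ x ≤ dep Γ x₀ (anc hc x₀ x j) + k := by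
    intro k
    induction k with
    | zero =>
      intro j hj
      have hx : anc hc x₀ x j = x := by
        have : j = dep Γ x₀ x := by omega
        rw [this]; exact anc_last hc ha x₀ x
      rw [hx]; omega
    | succ k ih =>
      intro j hj
      have h1 := ih (j + 1) (by omega)
      have h2 : dep Γ x₀ (anc hc x₀ x (j+1)) ≤ dep Γ x₀ (anc hc x₀ x j) + 1 := by
        refine dep_le_succ_of_adj hc x₀ ?_
        exact adj_anc hc ha x₀ (by omega)
      omega
  have h1 := hub i hi
  have h2 := hlb (dep Γ x₀ x - i) i (by omega)
  omega

lemma mem_support_Pw {x y : V} :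
    y ∈ (Pw hc x₀ x).support ↔ ∃ i, i ≤ dep Γ x₀ x ∧ anc hc x₀ x i = y := by
  rw [Walk.mem_support_iff_exists_getVert]
  constructor
  · rintro ⟨i, h1, h2⟩; exact ⟨i, by rwa [length_Pw hc ha] at h2, h1⟩
  · rintro ⟨i, h1, h2⟩; exact ⟨i, h2, by rwa [length_Pw hc ha]⟩

lemma anc_mem_support {x : V} {i : ℕ} (hi : i ≤ dep Γ x₀ x) :
    anc hc x₀ x i ∈ (Pw hc x₀ x).support :=
  (mem_support_Pw hc ha x₀).2 ⟨i, hi, rfl⟩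

lemma Pw_takeUntil {x y : V} (h : y ∈ (Pw hc x₀ x).support) :
    Pw hc x₀ y = (Pw hc x₀ x).takeUntil y h :=
  (walk_eq_pth hc ha _ ((Pw_isPath hc x₀ x).takeUntil h)).symm

/-- T5: ancestor of ancestor -/
lemma anc_anc {x : V} {i j : ℕ} (hi : i ≤ dep Γ x₀ x) (hj : j ≤ i) :
    anc hc x₀ (anc hc x₀ x i) j = anc hc x₀ x j := by
  set y := anc hc x₀ x i with hy
  have hmem : y ∈ (Pw hc x₀ x).support := anc_mem_support hc ha x₀ hi
  have hdy : dep Γ x₀ y = i := dep_anc hc ha x₀ hi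
  have htu : Pw hc x₀ y = (Pw hc x₀ x).takeUntil y hmem := Pw_takeUntil hc ha x₀ hmem
  have hlen : ((Pw hc x₀ x).takeUntil y hmem).length = i := by
    rw [← htu, length_Pw hc ha, hdy]
  have hspec := (Pw hc x₀ x).take_spec hmem
  rcases Nat.lt_or_ge j i with hlt | hge
  · have h2 := congrArg (fun w => w.getVert j) hspec
    simp only [Walk.getVert_append, hlen] at h2
    rw [if_pos hlt] at h2
    rw [anc, htu, anc, h2]
  · have hji : j = i := le_antisymm hj hge
    subst hji
    rw [anc, htu]
    have h3 : ((Pw hc x₀ x).takeUntil y hmem).getVert j = y := by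
      rw [← hlen]; exact Walk.getVert_length _
    rw [h3, hy]

lemma adj_par {x : V} (hx : x ≠ x₀) : Γ.Adj (par hc x₀ x) x := by
  have h1 : 1 ≤ dep Γ x₀ x := dep_pos hc x₀ hx
  have h2 := adj_anc hc ha x₀ (x := x) (i := dep Γ x₀ x - 1) (by omega)
  rw [par]
  have he : dep Γ x₀ x - 1 + 1 = dep Γ x₀ x := by omega
  rw [he] at h2
  rwa [anc_last hc ha] at h2

lemma dep_par {x : V} (hx : x ≠ x₀) : dep Γ x₀ (par hc x₀ x) = dep Γ x₀ x - 1 := by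
  apply dep_anc hc ha
  omega

lemma par_anc {x : V} {i : ℕ} (hi : i + 1 ≤ dep Γ x₀ x) :
    par hc x₀ (anc hc x₀ x (i + 1)) = anc hc x₀ x i := by
  rw [par, dep_anc hc ha x₀ hi]
  simpa using anc_anc hc ha x₀ hi (by omega)

lemma par_eq_of_adj_of_dep {x y : V} (hxy : Γ.Adj x y) (hd : dep Γ x₀ y = dep Γ x₀ x + 1) :
    par hc x₀ y = x := by
  have hns : y ∉ (Pw hc x₀ x).support := by
    intro hmem
    obtain ⟨i, hi, he⟩ := (mem_support_Pw hc ha x₀).1 hmem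
    have h4 := dep_anc hc ha x₀ hi
    rw [he] at h4
    omega
  have hpath : ((Pw hc x₀ x).concat hxy).IsPath := by
    rw [Walk.concat_eq_append]
    rw [Walk.isPath_def, Walk.support_append]
    refine List.Nodup.append ((Pw_isPath hc x₀ x).support_nodup) ?_ ?_
    · simp
    · intro a hax hay
      simp only [Walk.support_cons, Walk.support_nil, List.tail_cons, List.mem_singleton] at hay
      subst hay; exact hns hax
  have heq : Pw hc x₀ y = (Pw hc x₀ x).concat hxy :=
    (walk_eq_pth hc ha _ hpath).symm
  rw [par, hd]
  simp only [Nat.add_sub_cancel]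
  rw [anc, heq, Walk.concat_eq_append, Walk.getVert_append]
  rw [length_Pw hc ha]
  simp

lemma dep_ne_of_adj {x y : V} (hxy : Γ.Adj x y) : dep Γ x₀ x ≠ dep Γ x₀ y := by
  intro he
  have hns : y ∉ (Pw hc x₀ x).support := by
    intro hmem
    obtain ⟨i, hi, hie⟩ := (mem_support_Pw hc ha x₀).1 hmem
    have hdi := dep_anc hc ha x₀ hi
    rw [hie] at hdi
    have h5 : i = dep Γ x₀ x := by omega
    subst h5
    rw [anc_last hc ha] at hie
    exact hxy.ne hie
  have hpath : ((Pw hc x₀ x).concat hxy).IsPath := by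
    rw [Walk.concat_eq_append]
    rw [Walk.isPath_def, Walk.support_append]
    refine List.Nodup.append ((Pw_isPath hc x₀ x).support_nodup) ?_ ?_
    · simp
    · intro a hax hay
      simp only [Walk.support_cons, Walk.support_nil, List.tail_cons, List.mem_singleton] at hay
      subst hay; exact hns hax
  have heq : Pw hc x₀ y = (Pw hc x₀ x).concat hxy := (walk_eq_pth hc ha _ hpath).symm
  have hl := length_Pw hc ha x₀ y
  rw [heq] at hl
  rw [Walk.concat_eq_append, Walk.length_append] at hl
  rw [length_Pw hc ha] at hl
  simp only [Walk.length_cons, Walk.length_nil] at hl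
  omega

lemma par_or_par_of_adj {x y : V} (hxy : Γ.Adj x y) :
    par hc x₀ y = x ∨ par hc x₀ x = y := by
  have h1 := dep_le_succ_of_adj hc x₀ hxy
  have h2 := dep_le_succ_of_adj hc x₀ hxy.symm
  have h3 := dep_ne_of_adj hc ha x₀ hxy
  rcases Nat.lt_or_ge (dep Γ x₀ x) (dep Γ x₀ y) with h | h
  · left; exact par_eq_of_adj_of_dep hc ha x₀ hxy (by omega)
  · right; exact par_eq_of_adj_of_dep hc ha x₀ hxy.symm (by omega)

end Tree


section Finiteness

variable (hc : Γ.Connected) (ha : Γ.IsAcyclic)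
  (hdeg : ∀ v : V, (Γ.neighborSet v).ncard = 3) (x₀ : V)

include hdeg in
lemma nbr_finite (v : V) : (Γ.neighborSet v).Finite := by
  by_contra h
  have h2 := Set.Infinite.ncard (h : (Γ.neighborSet v).Infinite)
  rw [hdeg v] at h2
  omega

/-- neighbours as a finset -/
noncomputable def nbrF (v : V) : Finset V := (nbr_finite hdeg v).toFinset

lemma card_nbrF (v : V) : (nbrF hdeg v).card = 3 := by
  rw [nbrF, ← Set.ncard_eq_toFinset_card _ (nbr_finite hdeg v)]
  exact hdeg v

lemma mem_nbrF {v y : V} : y ∈ nbrF hdeg v ↔ Γ.Adj v y := by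
  simp [nbrF, Set.Finite.mem_toFinset]

include hc ha hdeg in
lemma ball_finite (n : ℕ) : (ballSet Γ x₀ n).Finite := by
  induction n with
  | zero =>
    apply Set.Finite.subset (Set.finite_singleton x₀)
    intro x hx
    simp only [ballSet, Set.mem_setOf_eq, Nat.le_zero] at hx
    have : x = x₀ := by
      have := (dep_eq_zero_iff hc x₀ (x := x)).1 (by simpa [dep, SimpleGraph.dist_comm] using hx)
      exact this
    simp [this]
  | succ n ih =>
    apply Set.Finite.subset (Set.Finite.union ih
      (Set.Finite.biUnion ih (fun y _ => nbr_finite hdeg y)))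
    intro x hx
    simp only [ballSet, Set.mem_setOf_eq] at hx
    rcases Nat.lt_or_ge (Γ.dist x₀ x) (n + 1) with h | h
    · left; simpa [ballSet] using Nat.lt_succ_iff.mp h
    · right
      have hdx : dep Γ x₀ x = n + 1 := le_antisymm hx h
      have hxne : x ≠ x₀ := by
        intro hh; rw [hh, dep_x₀] at hdx; omega
      refine Set.mem_biUnion (s := ballSet Γ x₀ n) (t := fun y => Γ.neighborSet y)
        ?_ ((adj_par hc ha x₀ hxne))
      simp only [ballSet, Set.mem_setOf_eq]
      have := dep_par hc ha x₀ hxne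
      rw [hdx] at this
      simpa [dep] using le_of_eq this

include hc ha hdeg in
lemma meetingEdges_finite (n : ℕ) :
    (meetingEdges Γ (ballSet Γ x₀ n)).Finite := by
  refine Set.Finite.subset
    (Set.Finite.image (fun p : V × V => s(p.1, p.2))
      ((ball_finite hc ha hdeg x₀ (n+1)).prod (ball_finite hc ha hdeg x₀ (n+1)))) ?_
  rintro e ⟨hedge, x, hxball, hxe⟩
  induction e with
  | _ a b =>
    have hadj : Γ.Adj a b := hedge
    simp only [Sym2.mem_iff] at hxe
    have hab : a ∈ ballSet Γ x₀ (n+1) ∧ b ∈ ballSet Γ x₀ (n+1) := by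
      rcases hxe with rfl | rfl
      · constructor
        · exact Set.mem_setOf_eq ▸ le_trans hxball (by omega)
        · have := dep_le_succ_of_adj hc x₀ hadj
          simp only [ballSet, Set.mem_setOf_eq] at hxball ⊢
          simp only [dep] at this
          omega
      · constructor
        · have := dep_le_succ_of_adj hc x₀ hadj.symm
          simp only [ballSet, Set.mem_setOf_eq] at hxball ⊢
          simp only [dep] at this
          omega
        · exact Set.mem_setOf_eq ▸ le_trans hxball (by omega)
    exact ⟨(a, b), Set.mem_prod.2 ⟨hab.1, hab.2⟩, rfl⟩

lemma omega_finite {n : ℕ} {ε : ℤ} (hb : (ballSet Γ x₀ n).Finite) :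
    (OmegaBC Γ x₀ n ε).Finite := by
  have key : Set.InjOn (fun σ : V → ℤ => {x | x ∈ ballSet Γ x₀ n ∧ σ x = -1})
      (OmegaBC Γ x₀ n ε) := by
    intro σ hσ τ hτ he
    funext x
    by_cases hx : x ∈ ballSet Γ x₀ n
    · have h1 := hσ.1 x
      have h2 := hτ.1 x
      have hiff : σ x = -1 ↔ τ x = -1 := by
        have := Set.ext_iff.mp he x
        simpa only [Set.mem_setOf_eq, hx, true_and] using this
      rcases h1 with h1 | h1 <;> rcases h2 with h2 | h2
      · rw [h1, h2]
      · exfalso; have h3 := hiff.mpr h2; rw [h3] at h1; omega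
      · exfalso; have h3 := hiff.mp h1; rw [h2] at h3; omega
      · rw [h1, h2]
    · rw [hσ.2 x hx, hτ.2 x hx]
  have himg : (fun σ : V → ℤ => {x | x ∈ ballSet Γ x₀ n ∧ σ x = -1}) '' (OmegaBC Γ x₀ n ε)
      ⊆ {s : Set V | s ⊆ ballSet Γ x₀ n} := by
    rintro s ⟨σ, _, rfl⟩
    intro x hx
    exact hx.1
  exact Set.Finite.of_finite_image (Set.Finite.subset hb.finite_subsets himg) key

end Finiteness
section Counting

open scoped Classical

variable (hc : Γ.Connected) (ha : Γ.IsAcyclic)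
  (hdeg : ∀ v : V, (Γ.neighborSet v).ncard = 3) (x₀ : V) (n : ℕ)

/-- ball as finset -/
noncomputable def Bf : Finset V := (ball_finite hc ha hdeg x₀ n).toFinset

lemma mem_Bf {x : V} : x ∈ Bf hc ha hdeg x₀ n ↔ dep Γ x₀ x ≤ n := by
  simp [Bf, ballSet, Set.Finite.mem_toFinset, dep]

/-- x is a descendant of v -/
def DescP (v x : V) : Prop := dep Γ x₀ v ≤ dep Γ x₀ x ∧ anc hc x₀ x (dep Γ x₀ v) = v

/-- the family of finite parent-closed sets rooted at v, inside the ball -/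
noncomputable def famS (v : V) : Finset (Finset V) :=
  (Bf hc ha hdeg x₀ n).powerset.filter
    (fun D => v ∈ D ∧ (∀ x ∈ D, dep Γ x₀ v ≤ dep Γ x₀ x) ∧
      (∀ x ∈ D, x ≠ v → par hc x₀ x ∈ D))

/-- children of v -/
noncomputable def chF (v : V) : Finset V :=
  (nbrF hdeg v).filter (fun y => par hc x₀ y = v)

/-- the subtree generating function -/
noncomputable def Sval (t : ℝ) (v : V) : ℝ :=
  ∑ D ∈ famS hc ha hdeg x₀ n v, t ^ D.card

lemma mem_famS {v : V} {D : Finset V} :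
    D ∈ famS hc ha hdeg x₀ n v ↔ (∀ x ∈ D, dep Γ x₀ x ≤ n) ∧ v ∈ D ∧
      (∀ x ∈ D, dep Γ x₀ v ≤ dep Γ x₀ x) ∧ (∀ x ∈ D, x ≠ v → par hc x₀ x ∈ D) := by
  rw [famS, Finset.mem_filter, Finset.mem_powerset, and_congr_left_iff]
  intro _
  constructor
  · intro h x hx; exact (mem_Bf hc ha hdeg x₀ n).1 (h hx)
  · intro h x hx; exact (mem_Bf hc ha hdeg x₀ n).2 (h x hx)

include ha in
lemma descP_self (v : V) : DescP hc x₀ v v := ⟨le_refl _, anc_last hc ha x₀ v⟩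

lemma descP_dep_le {v x : V} (h : DescP hc x₀ v x) : dep Γ x₀ v ≤ dep Γ x₀ x := h.1

include ha in
lemma eq_of_descP_of_dep_eq {v x : V} (h : DescP hc x₀ v x) (he : dep Γ x₀ v = dep Γ x₀ x) :
    x = v := by
  have h2 := h.2
  rw [he] at h2
  rw [← h2, anc_last hc ha]

include ha in
lemma mem_descP_of_mem_famS {v : V} {D : Finset V} (hD : D ∈ famS hc ha hdeg x₀ n v)
    {x : V} (hx : x ∈ D) : DescP hc x₀ v x := by
  obtain ⟨hball, hvD, hmin, hpar⟩ := (mem_famS hc ha hdeg x₀ n).1 hD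
  -- strong induction on dep x
  have main : ∀ k : ℕ, ∀ y ∈ D, dep Γ x₀ y ≤ k → DescP hc x₀ v y := by
    intro k
    induction k with
    | zero =>
      intro y hy hdy
      have h0 : dep Γ x₀ y = 0 := by omega
      have h1 : dep Γ x₀ v = 0 := le_antisymm (h0 ▸ hmin y hy) (Nat.zero_le _)
      have : y = v := by
        rw [(dep_eq_zero_iff hc x₀).1 h0, ← (dep_eq_zero_iff hc x₀).1 h1]
      rw [this]; exact descP_self hc ha x₀ v
    | succ k ih =>
      intro y hy hdy
      by_cases hyv : y = v
      · rw [hyv]; exact descP_self hc ha x₀ v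
      · have hyx₀ : y ≠ x₀ := by
          intro h0
          have : dep Γ x₀ y = 0 := by rw [h0, dep_x₀]
          have h1 : dep Γ x₀ v = 0 := le_antisymm (this ▸ hmin y hy) (Nat.zero_le _)
          exact hyv (by rw [h0, ← (dep_eq_zero_iff hc x₀).1 h1])
        have hp : par hc x₀ y ∈ D := hpar y hy hyv
        have hdp : dep Γ x₀ (par hc x₀ y) = dep Γ x₀ y - 1 := dep_par hc ha x₀ hyx₀
        have hdy1 : 1 ≤ dep Γ x₀ y := dep_pos hc x₀ hyx₀
        have ihp : DescP hc x₀ v (par hc x₀ y) := ih (par hc x₀ y) hp (by omega)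
        have hvle : dep Γ x₀ v ≤ dep Γ x₀ y - 1 := by
          have := hmin (par hc x₀ y) hp
          omega
        constructor
        · omega
        · have := anc_anc hc ha x₀ (x := y) (i := dep Γ x₀ y - 1) (j := dep Γ x₀ v)
            (by omega) hvle
          rw [← par] at this
          rw [← this]
          exact ihp.2
  exact main (dep Γ x₀ x) x hx (le_refl _)

include ha in
lemma anc_mem_of_mem_famS {v : V} {D : Finset V} (hD : D ∈ famS hc ha hdeg x₀ n v)
    {x : V} (hx : x ∈ D) {j : ℕ} (hj1 : dep Γ x₀ v ≤ j) (hj2 : j ≤ dep Γ x₀ x) :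
    anc hc x₀ x j ∈ D := by
  obtain ⟨hball, hvD, hmin, hpar⟩ := (mem_famS hc ha hdeg x₀ n).1 hD
  have main : ∀ k : ℕ, ∀ y ∈ D, j + k = dep Γ x₀ y → anc hc x₀ y j ∈ D := by
    intro k
    induction k with
    | zero =>
      intro y hy hk
      have : anc hc x₀ y j = y := by
        have hj : j = dep Γ x₀ y := by omega
        rw [hj]; exact anc_last hc ha x₀ y
      rwa [this]
    | succ k ih =>
      intro y hy hk
      have hyv : y ≠ v := by
        intro h0
        rw [h0] at hk
        omega
      have hyx₀ : y ≠ x₀ := by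
        intro h0
        have : dep Γ x₀ y = 0 := by rw [h0, dep_x₀]
        omega
      have hp : par hc x₀ y ∈ D := hpar y hy hyv
      have hdp : dep Γ x₀ (par hc x₀ y) = dep Γ x₀ y - 1 := dep_par hc ha x₀ hyx₀
      have heq : anc hc x₀ y j = anc hc x₀ (par hc x₀ y) j := by
        rw [par]
        exact (anc_anc hc ha x₀ (by omega) (by omega)).symm
      rw [heq]
      exact ih (par hc x₀ y) hp (by omega)
  exact main (dep Γ x₀ x - j) x hx (by omega)

lemma mem_chF {v c : V} : c ∈ chF hc hdeg x₀ v ↔ Γ.Adj v c ∧ par hc x₀ c = v := by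
  rw [chF, Finset.mem_filter, mem_nbrF]

include ha in
lemma chF_ne_root {v c : V} (hcc : c ∈ chF hc hdeg x₀ v) : c ≠ x₀ := by
  obtain ⟨hadj, hp⟩ := (mem_chF hc hdeg x₀).1 hcc
  intro h0
  rw [h0, par_x₀ hc x₀] at hp
  rw [h0] at hadj
  exact hadj.ne (hp.symm)

include ha in
lemma dep_chF {v c : V} (hcc : c ∈ chF hc hdeg x₀ v) :
    dep Γ x₀ c = dep Γ x₀ v + 1 := by
  obtain ⟨hadj, hp⟩ := (mem_chF hc hdeg x₀).1 hcc
  have h1 : c ≠ x₀ := chF_ne_root hc ha hdeg x₀ hcc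
  have h2 := dep_par hc ha x₀ h1
  rw [hp] at h2
  have := dep_pos hc x₀ h1
  omega

include ha in
lemma descP_ne_of_chF {v c x : V} (hcc : c ∈ chF hc hdeg x₀ v) (h : DescP hc x₀ c x) :
    x ≠ v := by
  intro h0
  have h1 := descP_dep_le hc x₀ h
  rw [h0, dep_chF hc ha hdeg x₀ hcc] at h1
  omega

include ha in
lemma descP_unique {v c c' x : V} (hcc : c ∈ chF hc hdeg x₀ v) (hcc' : c' ∈ chF hc hdeg x₀ v)
    (h : DescP hc x₀ c x) (h' : DescP hc x₀ c' x) : c = c' := by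
  have h1 := dep_chF hc ha hdeg x₀ hcc
  have h2 := dep_chF hc ha hdeg x₀ hcc'
  rw [← h.2, ← h'.2, h1, h2]

include ha in
lemma cover_famS {v : V} {D : Finset V} (hD : D ∈ famS hc ha hdeg x₀ n v)
    {x : V} (hx : x ∈ D) (hxv : x ≠ v) :
    ∃ c ∈ chF hc hdeg x₀ v, DescP hc x₀ c x := by
  have hdesc := mem_descP_of_mem_famS hc ha hdeg x₀ n hD hx
  have hdlt : dep Γ x₀ v < dep Γ x₀ x := by
    rcases Nat.lt_or_ge (dep Γ x₀ v) (dep Γ x₀ x) with h | h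
    · exact h
    · exact absurd (eq_of_descP_of_dep_eq hc ha x₀ hdesc (le_antisymm hdesc.1 h)) hxv
  refine ⟨anc hc x₀ x (dep Γ x₀ v + 1), ?_, ?_, ?_⟩
  · rw [mem_chF]
    constructor
    · have := adj_anc hc ha x₀ (x := x) (i := dep Γ x₀ v) hdlt
      rwa [hdesc.2] at this
    · have := par_anc hc ha x₀ (x := x) (i := dep Γ x₀ v) hdlt
      rw [this, hdesc.2]
  · rw [dep_anc hc ha x₀ (by omega)]
    omega
  · rw [dep_anc hc ha x₀ (by omega)]

include ha in
lemma comp_mem_famS {v : V} {D : Finset V} (hD : D ∈ famS hc ha hdeg x₀ n v)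
    {c : V} (hcc : c ∈ chF hc hdeg x₀ v)
    (hne : (D.filter (fun x => DescP hc x₀ c x)).Nonempty) :
    D.filter (fun x => DescP hc x₀ c x) ∈ famS hc ha hdeg x₀ n c := by
  obtain ⟨hball, hvD, hmin, hpar⟩ := (mem_famS hc ha hdeg x₀ n).1 hD
  have hdc := dep_chF hc ha hdeg x₀ hcc
  rw [mem_famS]
  refine ⟨?_, ?_, ?_, ?_⟩
  · intro x hx
    exact hball x (Finset.mem_of_mem_filter x hx)
  · -- c itself belongs
    obtain ⟨y, hy⟩ := hne
    rw [Finset.mem_filter] at hy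
    obtain ⟨hyD, hdy⟩ := hy
    rw [Finset.mem_filter]
    constructor
    · have := anc_mem_of_mem_famS hc ha hdeg x₀ n hD hyD (j := dep Γ x₀ c)
        (by omega) hdy.1
      rwa [hdy.2] at this
    · exact descP_self hc ha x₀ c
  · intro x hx
    rw [Finset.mem_filter] at hx
    exact hx.2.1
  · intro x hx hxc
    rw [Finset.mem_filter] at hx ⊢
    obtain ⟨hxD, hdx⟩ := hx
    have hxv : x ≠ v := descP_ne_of_chF hc ha hdeg x₀ hcc hdx
    have hdxc : dep Γ x₀ c < dep Γ x₀ x := by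
      rcases Nat.lt_or_ge (dep Γ x₀ c) (dep Γ x₀ x) with h | h
      · exact h
      · exact absurd (eq_of_descP_of_dep_eq hc ha x₀ hdx (le_antisymm hdx.1 h)) hxc
    have hxx₀ : x ≠ x₀ := by
      intro h0
      have : dep Γ x₀ x = 0 := by rw [h0, dep_x₀]
      omega
    have hdp := dep_par hc ha x₀ hxx₀
    refine ⟨hpar x hxD hxv, by omega, ?_⟩
    have := anc_anc hc ha x₀ (x := x) (i := dep Γ x₀ x - 1) (j := dep Γ x₀ c)
      (by omega) (by omega)
    rw [← par] at this
    rw [this]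
    exact hdx.2

include ha in
lemma decomp_famS {v : V} {D : Finset V} (hD : D ∈ famS hc ha hdeg x₀ n v) :
    D = insert v ((chF hc hdeg x₀ v).biUnion
      (fun c => D.filter (fun x => DescP hc x₀ c x))) := by
  obtain ⟨hball, hvD, hmin, hpar⟩ := (mem_famS hc ha hdeg x₀ n).1 hD
  apply Finset.ext
  intro x
  simp only [Finset.mem_insert, Finset.mem_biUnion, Finset.mem_filter]
  constructor
  · intro hx
    by_cases hxv : x = v
    · left; exact hxv
    · right
      obtain ⟨c, hcc, hdx⟩ := cover_famS hc ha hdeg x₀ n hD hx hxv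
      exact ⟨c, hcc, hx, hdx⟩
  · rintro (rfl | ⟨c, hcc, hx, _⟩)
    · exact hvD
    · exact hx

include ha in
lemma card_decomp_famS {v : V} {D : Finset V} (hD : D ∈ famS hc ha hdeg x₀ n v) :
    D.card = 1 + ∑ c ∈ chF hc hdeg x₀ v, (D.filter (fun x => DescP hc x₀ c x)).card := by
  have hdisj : ∀ c₁ ∈ chF hc hdeg x₀ v, ∀ c₂ ∈ chF hc hdeg x₀ v, c₁ ≠ c₂ →
      Disjoint (D.filter (fun x => DescP hc x₀ c₁ x))
        (D.filter (fun x => DescP hc x₀ c₂ x)) := by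
    intro c₁ h1 c₂ h2 hne
    rw [Finset.disjoint_left]
    intro x hx1 hx2
    rw [Finset.mem_filter] at hx1 hx2
    exact hne (descP_unique hc ha hdeg x₀ h1 h2 hx1.2 hx2.2)
  have hvnot : v ∉ (chF hc hdeg x₀ v).biUnion
      (fun c => D.filter (fun x => DescP hc x₀ c x)) := by
    rw [Finset.mem_biUnion]
    rintro ⟨c, hcc, hmem⟩
    rw [Finset.mem_filter] at hmem
    exact (descP_ne_of_chF hc ha hdeg x₀ hcc hmem.2) rfl
  conv_lhs => rw [decomp_famS hc ha hdeg x₀ n hD]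
  rw [Finset.card_insert_of_notMem hvnot, Finset.card_biUnion hdisj]
  omega

lemma Sval_nonneg {t : ℝ} (ht : 0 ≤ t) (v : V) : 0 ≤ Sval hc ha hdeg x₀ n t v :=
  Finset.sum_nonneg (fun D _ => pow_nonneg ht _)

include ha in
lemma Sval_rec {t : ℝ} (ht : 0 ≤ t) (v : V) :
    Sval hc ha hdeg x₀ n t v ≤
      t * ∏ c ∈ chF hc hdeg x₀ v, (1 + Sval hc ha hdeg x₀ n t c) := by
  classical
  set ch := chF hc hdeg x₀ v with hch
  -- rewrite each factor as a sum over `insert ∅ (famS c)`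
  have hfac : ∀ c ∈ ch, 1 + Sval hc ha hdeg x₀ n t c
      = ∑ D ∈ insert (∅ : Finset V) (famS hc ha hdeg x₀ n c), t ^ D.card := by
    intro c _
    have hnm : (∅ : Finset V) ∉ famS hc ha hdeg x₀ n c := by
      intro h
      exact absurd ((mem_famS hc ha hdeg x₀ n).1 h).2.1 (by simp)
    rw [Finset.sum_insert hnm]
    simp [Sval]
  rw [Finset.prod_congr rfl hfac, Finset.prod_sum]
  -- now the RHS is t * ∑ over pi
  set piS := ch.pi (fun c => insert (∅ : Finset V) (famS hc ha hdeg x₀ n c)) with hpiS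
  rw [Finset.mul_sum]
  -- define the injection
  set φ : Finset V → (∀ c, c ∈ ch → Finset V) :=
    fun D => fun c _ => D.filter (fun x => DescP hc x₀ c x) with hφ
  have hmaps : ∀ D ∈ famS hc ha hdeg x₀ n v, φ D ∈ piS := by
    intro D hD
    rw [hpiS, Finset.mem_pi]
    intro c hcc
    rw [Finset.mem_insert]
    by_cases hne : (D.filter (fun x => DescP hc x₀ c x)).Nonempty
    · right; exact comp_mem_famS hc ha hdeg x₀ n hD hcc hne
    · left
      rw [Finset.not_nonempty_iff_eq_empty] at hne
      exact hne
  have hinj : Set.InjOn φ (famS hc ha hdeg x₀ n v : Set (Finset V)) := by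
    intro D₁ h₁ D₂ h₂ he
    rw [Finset.mem_coe] at h₁ h₂
    rw [decomp_famS hc ha hdeg x₀ n h₁, decomp_famS hc ha hdeg x₀ n h₂]
    congr 1
    apply Finset.biUnion_congr rfl
    intro c hcc
    have := congrFun (congrFun he c) hcc
    exact this
  have hterm : ∀ D ∈ famS hc ha hdeg x₀ n v,
      t ^ D.card = t * ∏ c ∈ ch.attach, t ^ ((φ D) c.1 c.2).card := by
    intro D hD
    rw [Finset.prod_pow_eq_pow_sum, ← pow_succ']
    congr 1
    have hsum : ∑ c ∈ ch.attach, ((φ D) c.1 c.2).card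
        = ∑ c ∈ ch, (D.filter (fun x => DescP hc x₀ c x)).card :=
      Finset.sum_attach ch (fun c => (D.filter (fun x => DescP hc x₀ c x)).card)
    rw [hsum, card_decomp_famS hc ha hdeg x₀ n hD, hch]
    omega
  calc Sval hc ha hdeg x₀ n t v
      = ∑ D ∈ famS hc ha hdeg x₀ n v, t * ∏ c ∈ ch.attach, t ^ ((φ D) c.1 c.2).card := by
        rw [Sval]; exact Finset.sum_congr rfl hterm
    _ = ∑ q ∈ (famS hc ha hdeg x₀ n v).image φ, t * ∏ c ∈ ch.attach, t ^ ((q c.1 c.2).card) := by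
        rw [Finset.sum_image (fun D h1 E h2 he => hinj h1 h2 he)]
    _ ≤ ∑ q ∈ piS, t * ∏ c ∈ ch.attach, t ^ ((q c.1 c.2).card) := by
        apply Finset.sum_le_sum_of_subset_of_nonneg
        · intro q hq
          rw [Finset.mem_image] at hq
          obtain ⟨D, hD, rfl⟩ := hq
          exact hmaps D hD
        · intro q _ _
          exact mul_nonneg ht (Finset.prod_nonneg (fun c _ => pow_nonneg ht _))

include ha in
lemma famS_empty_of_deep {v : V} (hv : n < dep Γ x₀ v) : famS hc ha hdeg x₀ n v = ∅ := by
  rw [Finset.eq_empty_iff_forall_notMem]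
  intro D hD
  obtain ⟨hball, hvD, _, _⟩ := (mem_famS hc ha hdeg x₀ n).1 hD
  have := hball v hvD
  omega

lemma card_chF_le (v : V) : (chF hc hdeg x₀ v).card ≤ 3 := by
  calc (chF hc hdeg x₀ v).card ≤ (nbrF hdeg v).card := Finset.card_filter_le _ _
    _ = 3 := card_nbrF hdeg v

include ha in
lemma Sval_le {t : ℝ} (ht : 0 ≤ t) (ht8 : t ≤ 1/8) (v : V) :
    Sval hc ha hdeg x₀ n t v ≤ 2 * t := by
  have main : ∀ k : ℕ, ∀ v : V, n + 1 - dep Γ x₀ v ≤ k → Sval hc ha hdeg x₀ n t v ≤ 2 * t := by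
    intro k
    induction k with
    | zero =>
      intro v hv
      have hdeep : n < dep Γ x₀ v := by omega
      rw [Sval, famS_empty_of_deep hc ha hdeg x₀ n hdeep]
      simp
      positivity
    | succ k ih =>
      intro v hv
      rcases Nat.lt_or_ge n (dep Γ x₀ v) with hdeep | hshallow
      · rw [Sval, famS_empty_of_deep hc ha hdeg x₀ n hdeep]
        simp
        positivity
      · refine le_trans (Sval_rec hc ha hdeg x₀ n ht v) ?_
        have hc3 : ∀ c ∈ chF hc hdeg x₀ v, 1 + Sval hc ha hdeg x₀ n t c ≤ 1 + 2 * t := by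
          intro c hcc
          have hdc := dep_chF hc ha hdeg x₀ hcc
          have : Sval hc ha hdeg x₀ n t c ≤ 2 * t := ih c (by omega)
          linarith
        have hprod : ∏ c ∈ chF hc hdeg x₀ v, (1 + Sval hc ha hdeg x₀ n t c)
            ≤ (1 + 2*t) ^ (chF hc hdeg x₀ v).card := by
          rw [← Finset.prod_const]
          apply Finset.prod_le_prod
          · intro c _
            have := Sval_nonneg hc ha hdeg x₀ n ht c
            linarith
          · exact hc3
        have hpow : (1 + 2*t) ^ (chF hc hdeg x₀ v).card ≤ (1 + 2*t) ^ 3 := by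
          apply pow_le_pow_right₀ (by linarith)
          exact card_chF_le hc hdeg x₀ v
        calc t * ∏ c ∈ chF hc hdeg x₀ v, (1 + Sval hc ha hdeg x₀ n t c)
            ≤ t * ((1 + 2*t) ^ 3) := by
              apply mul_le_mul_of_nonneg_left _ ht
              exact le_trans hprod hpow
          _ ≤ t * ((5/4 : ℝ) ^ 3) := by
              apply mul_le_mul_of_nonneg_left _ ht
              apply pow_le_pow_left₀ (by linarith) (by linarith)
          _ ≤ 2 * t := by nlinarith
  exact main (n + 1 - dep Γ x₀ v) v (le_refl _)

end Counting

section Cluster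

open scoped Classical

variable (hc : Γ.Connected) (ha : Γ.IsAcyclic)
  (hdeg : ∀ v : V, (Γ.neighborSet v).ncard = 3) (x₀ : V) (n : ℕ)

/-- the minus-cluster of the root -/
def clusterSet (Γ : SimpleGraph V) (x₀ : V) (σ : V → ℤ) : Set V :=
  {x | ∃ w : Γ.Walk x₀ x, ∀ v ∈ w.support, σ v = -1}

lemma root_mem_clusterSet {σ : V → ℤ} (h : σ x₀ = -1) : x₀ ∈ clusterSet Γ x₀ σ :=
  ⟨Walk.nil, by simp [h]⟩

lemma neg_of_mem_clusterSet {σ : V → ℤ} {x : V} (h : x ∈ clusterSet Γ x₀ σ) : σ x = -1 := by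
  obtain ⟨w, hw⟩ := h
  exact hw x (Walk.end_mem_support w)

lemma clusterSet_subset_ball {σ : V → ℤ} (hσ : σ ∈ OmegaBC Γ x₀ n 1) {x : V}
    (h : x ∈ clusterSet Γ x₀ σ) : x ∈ ballSet Γ x₀ n := by
  by_contra hb
  have h1 := hσ.2 x hb
  have h2 := neg_of_mem_clusterSet x₀ h
  rw [h1] at h2
  norm_num at h2

include ha in
lemma neg_on_Pw_of_mem_clusterSet {σ : V → ℤ} {x : V} (h : x ∈ clusterSet Γ x₀ σ) :
    ∀ v ∈ (Pw hc x₀ x).support, σ v = -1 := by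
  obtain ⟨w, hw⟩ := h
  have heq : w.bypass = Pw hc x₀ x := walk_eq_pth hc ha w.bypass w.bypass_isPath
  intro v hv
  rw [← heq] at hv
  exact hw v (Walk.support_bypass_subset w hv)

include ha in
lemma par_mem_clusterSet {σ : V → ℤ} {x : V} (h : x ∈ clusterSet Γ x₀ σ) (hx : x ≠ x₀) :
    par hc x₀ x ∈ clusterSet Γ x₀ σ := by
  have h1 : 1 ≤ dep Γ x₀ x := dep_pos hc x₀ hx
  have hmem : par hc x₀ x ∈ (Pw hc x₀ x).support := by
    rw [par]
    exact anc_mem_support hc ha x₀ (by omega)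
  refine ⟨(Pw hc x₀ x).takeUntil _ hmem, ?_⟩
  intro v hv
  exact neg_on_Pw_of_mem_clusterSet hc ha x₀ h v (Walk.support_takeUntil_subset _ hmem hv)

lemma adj_mem_clusterSet {σ : V → ℤ} {x y : V} (h : x ∈ clusterSet Γ x₀ σ)
    (hxy : Γ.Adj x y) (hy : σ y = -1) : y ∈ clusterSet Γ x₀ σ := by
  obtain ⟨w, hw⟩ := h
  refine ⟨w.concat hxy, ?_⟩
  intro v hv
  rw [Walk.support_concat] at hv
  rcases List.mem_append.1 hv with h1 | h1
  · exact hw v h1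
  · rw [List.mem_singleton] at h1
    rw [h1]; exact hy

lemma boundary_one {σ : V → ℤ} (hσ : σ ∈ OmegaBC Γ x₀ n 1) {x y : V}
    (h : x ∈ clusterSet Γ x₀ σ) (hxy : Γ.Adj x y) (hy : y ∉ clusterSet Γ x₀ σ) : σ y = 1 := by
  rcases hσ.1 y with h1 | h1
  · exact h1
  · exact absurd (adj_mem_clusterSet x₀ h hxy h1) hy

/-- cluster as a finset -/
noncomputable def ClF (σ : V → ℤ) : Finset V :=
  (Bf hc ha hdeg x₀ n).filter (fun x => x ∈ clusterSet Γ x₀ σ)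

lemma mem_ClF {σ : V → ℤ} (hσ : σ ∈ OmegaBC Γ x₀ n 1) {x : V} :
    x ∈ ClF hc ha hdeg x₀ n σ ↔ x ∈ clusterSet Γ x₀ σ := by
  rw [ClF, Finset.mem_filter, and_iff_right_iff_imp]
  intro h
  rw [mem_Bf]
  exact clusterSet_subset_ball x₀ n hσ h

include ha in
lemma ClF_mem_famS {σ : V → ℤ} (hσ : σ ∈ OmegaBC Γ x₀ n 1) (hroot : σ x₀ = -1) :
    ClF hc ha hdeg x₀ n σ ∈ famS hc ha hdeg x₀ n x₀ := by
  rw [mem_famS]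
  refine ⟨?_, ?_, ?_, ?_⟩
  · intro x hx
    have := (mem_ClF hc ha hdeg x₀ n hσ).1 hx
    exact clusterSet_subset_ball x₀ n hσ this
  · exact (mem_ClF hc ha hdeg x₀ n hσ).2 (root_mem_clusterSet x₀ hroot)
  · intro x _
    rw [dep_x₀]
    omega
  · intro x hx hxne
    rw [mem_ClF hc ha hdeg x₀ n hσ] at hx ⊢
    exact par_mem_clusterSet hc ha x₀ hx hxne

/-- crossing edges of D -/
noncomputable def XB (D : Finset V) : Finset (Sym2 V) :=
  D.biUnion (fun x => ((nbrF hdeg x) \ D).image (fun y => s(x, y)))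

lemma mem_XB {D : Finset V} {e : Sym2 V} :
    e ∈ XB hdeg D ↔ ∃ x ∈ D, ∃ y ∈ nbrF hdeg x \ D, e = s(x, y) := by
  simp [XB, eq_comm]

lemma card_XB (D : Finset V) :
    (XB hdeg D).card = ∑ x ∈ D, ((nbrF hdeg x) \ D).card := by
  rw [XB, Finset.card_biUnion]
  · apply Finset.sum_congr rfl
    intro x hx
    apply Finset.card_image_of_injOn
    intro y hy y' hy' he
    rw [Finset.mem_coe, Finset.mem_sdiff] at hy hy'
    simp only [Sym2.eq, Sym2.rel_iff', Prod.mk.injEq, Prod.swap_prod_mk] at he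
    rcases he with ⟨_, h2⟩ | ⟨h1, h2⟩
    · exact h2
    · exact absurd (by rw [← h1]; exact hx) hy'.2
  · intro x hx x' hx' hne
    simp only [Function.onFun]
    rw [Finset.disjoint_left]
    intro e he he'
    rw [Finset.mem_image] at he he'
    obtain ⟨y, hy, rfl⟩ := he
    obtain ⟨y', hy', he2⟩ := he'
    rw [Finset.mem_sdiff] at hy hy'
    simp only [Sym2.eq, Sym2.rel_iff', Prod.mk.injEq, Prod.swap_prod_mk] at he2
    rcases he2 with ⟨h1, h2⟩ | ⟨h1, h2⟩
    · exact hne h1.symm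
    · exact hy'.2 (by rw [h2]; exact hx)

include ha in
lemma sum_inC_le {D : Finset V} (hD : D ∈ famS hc ha hdeg x₀ n x₀) :
    ∑ x ∈ D, ((nbrF hdeg x) ∩ D).card + 2 ≤ 2 * D.card := by
  obtain ⟨hball, hvD, hmin, hpar⟩ := (mem_famS hc ha hdeg x₀ n).1 hD
  set chD : V → Finset V := fun x => (D.filter (fun y => par hc x₀ y = x ∧ Γ.Adj x y)) with hchD
  have hsub : ∀ x ∈ D, (nbrF hdeg x) ∩ D ⊆ insert (par hc x₀ x) (chD x) := by
    intro x _ y hy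
    rw [Finset.mem_inter, mem_nbrF] at hy
    rcases par_or_par_of_adj hc ha x₀ hy.1 with h | h
    · apply Finset.mem_insert_of_mem
      rw [hchD]
      simp only [Finset.mem_filter]
      exact ⟨hy.2, h, hy.1⟩
    · rw [← h]
      exact Finset.mem_insert_self _ _
  have hcard1 : ∀ x ∈ D, ((nbrF hdeg x) ∩ D).card ≤ 1 + (chD x).card := by
    intro x hx
    calc ((nbrF hdeg x) ∩ D).card ≤ (insert (par hc x₀ x) (chD x)).card :=
          Finset.card_le_card (hsub x hx)
      _ ≤ 1 + (chD x).card := by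
          rw [add_comm]
          exact Finset.card_insert_le _ _
  -- the root has no parent among its neighbours
  have hroot : ((nbrF hdeg x₀) ∩ D).card ≤ (chD x₀).card := by
    apply Finset.card_le_card
    intro y hy
    rw [Finset.mem_inter, mem_nbrF] at hy
    rcases par_or_par_of_adj hc ha x₀ hy.1 with h | h
    · rw [hchD]
      simp only [Finset.mem_filter]
      exact ⟨hy.2, h, hy.1⟩
    · exfalso
      rw [par_x₀ hc x₀] at h
      exact hy.1.ne' h.symm
  -- children sets are pairwise disjoint inside D \ {x₀}
  have hsumch : ∑ x ∈ D, (chD x).card ≤ D.card - 1 := by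
    have hdisj : ∀ x₁ ∈ D, ∀ x₂ ∈ D, x₁ ≠ x₂ → Disjoint (chD x₁) (chD x₂) := by
      intro x₁ _ x₂ _ hne
      rw [Finset.disjoint_left]
      intro y hy1 hy2
      rw [hchD] at hy1 hy2
      simp only [Finset.mem_filter] at hy1 hy2
      exact hne (hy1.2.1 ▸ hy2.2.1.symm ▸ rfl)
    have hbi : D.biUnion chD ⊆ D.erase x₀ := by
      intro y hy
      rw [Finset.mem_biUnion] at hy
      obtain ⟨x, hx, hyx⟩ := hy
      rw [hchD] at hyx
      simp only [Finset.mem_filter] at hyx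
      rw [Finset.mem_erase]
      refine ⟨?_, hyx.1⟩
      intro h0
      rw [h0] at hyx
      rw [par_x₀ hc x₀] at hyx
      exact hyx.2.2.ne' hyx.2.1
    calc ∑ x ∈ D, (chD x).card = (D.biUnion chD).card := (Finset.card_biUnion hdisj).symm
      _ ≤ (D.erase x₀).card := Finset.card_le_card hbi
      _ = D.card - 1 := Finset.card_erase_of_mem hvD
  -- put it together
  have hsplit : ∑ x ∈ D, ((nbrF hdeg x) ∩ D).card
      ≤ (D.card - 1) + ∑ x ∈ D, (chD x).card := by
    have h1 : ∑ x ∈ D, ((nbrF hdeg x) ∩ D).card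
        = ((nbrF hdeg x₀) ∩ D).card + ∑ x ∈ D.erase x₀, ((nbrF hdeg x) ∩ D).card :=
      (Finset.add_sum_erase D _ hvD).symm
    have h2 : ∑ x ∈ D.erase x₀, ((nbrF hdeg x) ∩ D).card
        ≤ ∑ x ∈ D.erase x₀, (1 + (chD x).card) := by
      apply Finset.sum_le_sum
      intro x hx
      exact hcard1 x (Finset.mem_of_mem_erase hx)
    have h3 : ∑ x ∈ D.erase x₀, (1 + (chD x).card)
        = (D.card - 1) + ∑ x ∈ D.erase x₀, (chD x).card := by
      rw [Finset.sum_add_distrib, Finset.sum_const, smul_eq_mul, mul_one,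
        Finset.card_erase_of_mem hvD]
    have h6 : (chD x₀).card + ∑ x ∈ D.erase x₀, (chD x).card = ∑ x ∈ D, (chD x).card :=
      Finset.add_sum_erase D (fun x => (chD x).card) hvD
    omega
  have hDpos : 1 ≤ D.card := Finset.card_pos.2 ⟨x₀, hvD⟩
  -- also need: sum over D of chD ≤ D.card - 1 twice
  omega

include ha in
lemma card_XB_ge {D : Finset V} (hD : D ∈ famS hc ha hdeg x₀ n x₀) :
    D.card + 2 ≤ (XB hdeg D).card := by
  have h1 := card_XB hdeg D
  have h2 : ∀ x ∈ D, ((nbrF hdeg x) ∩ D).card + ((nbrF hdeg x) \ D).card = 3 := by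
    intro x _
    rw [Finset.card_inter_add_card_sdiff, card_nbrF]
  have h3 : ∑ x ∈ D, (((nbrF hdeg x) ∩ D).card + ((nbrF hdeg x) \ D).card) = 3 * D.card := by
    rw [Finset.sum_congr rfl h2, Finset.sum_const, smul_eq_mul, mul_comm]
  rw [Finset.sum_add_distrib] at h3
  have h4 := sum_inC_le hc ha hdeg x₀ n hD
  omega

end Cluster

section Energy

open scoped Classical

variable (hc : Γ.Connected) (ha : Γ.IsAcyclic)
  (hdeg : ∀ v : V, (Γ.neighborSet v).ncard = 3) (x₀ : V) (n : ℕ)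

/-- spin flip on D -/
def flip (D : Finset V) (σ : V → ℤ) : V → ℤ := fun x => if x ∈ D then -σ x else σ x

lemma flip_flip (D : Finset V) (σ : V → ℤ) : flip D (flip D σ) = σ := by
  funext x
  by_cases hx : x ∈ D <;> simp [flip, hx]

/-- edge weight -/
def edgeF (σ : V → ℤ) : Sym2 V → ℤ :=
  Sym2.lift ⟨fun x y => σ x * σ y, fun x y => mul_comm (σ x) (σ y)⟩

/-- meeting edges as a finset -/
noncomputable def MEf : Finset (Sym2 V) := (meetingEdges_finite hc ha hdeg x₀ n).toFinset

lemma mem_MEf {e : Sym2 V} :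
    e ∈ MEf hc ha hdeg x₀ n ↔ e ∈ meetingEdges Γ (ballSet Γ x₀ n) := Set.Finite.mem_toFinset _

lemma isingH_eq_sum (σ : V → ℤ) :
    isingH Γ x₀ n σ = -∑ e ∈ MEf hc ha hdeg x₀ n, edgeF σ e := by
  have hcoe : meetingEdges Γ (ballSet Γ x₀ n) = ↑(MEf hc ha hdeg x₀ n) :=
    ((meetingEdges_finite hc ha hdeg x₀ n).coe_toFinset).symm
  rw [isingH, hcoe, finsum_mem_coe_finset]
  rfl

lemma XB_subset_MEf {D : Finset V} (hball : ∀ x ∈ D, x ∈ ballSet Γ x₀ n) :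
    XB hdeg D ⊆ MEf hc ha hdeg x₀ n := by
  intro e he
  rw [mem_XB] at he
  obtain ⟨x, hx, y, hy, rfl⟩ := he
  rw [Finset.mem_sdiff, mem_nbrF] at hy
  rw [mem_MEf]
  exact ⟨hy.1, x, hball x hx, Sym2.mem_mk_left x y⟩

include hc ha in
lemma energy_identity {D : Finset V} {σ : V → ℤ}
    (hball : ∀ x ∈ D, x ∈ ballSet Γ x₀ n)
    (hneg : ∀ x ∈ D, σ x = -1)
    (hbd : ∀ x ∈ D, ∀ y, Γ.Adj x y → y ∉ D → σ y = 1) :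
    isingH Γ x₀ n σ = isingH Γ x₀ n (flip D σ) + 2 * (XB hdeg D).card := by
  have hsub : XB hdeg D ⊆ MEf hc ha hdeg x₀ n := XB_subset_MEf hc ha hdeg x₀ n hball
  have h1 : ∀ e ∈ XB hdeg D, edgeF (flip D σ) e - edgeF σ e = 2 := by
    intro e he
    rw [mem_XB] at he
    obtain ⟨x, hx, y, hy, rfl⟩ := he
    rw [Finset.mem_sdiff, mem_nbrF] at hy
    have hσx : σ x = -1 := hneg x hx
    have hσy : σ y = 1 := hbd x hx y hy.1 hy.2
    simp only [edgeF, Sym2.lift_mk, flip, if_pos hx, if_neg hy.2, hσx, hσy]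
    norm_num
  have h2 : ∀ e ∈ MEf hc ha hdeg x₀ n, e ∉ XB hdeg D →
      edgeF (flip D σ) e - edgeF σ e = 0 := by
    intro e he hne
    have hedge : e ∈ Γ.edgeSet := ((mem_MEf hc ha hdeg x₀ n).1 he).1
    induction e with
    | _ a b =>
      have hadj : Γ.Adj a b := hedge
      by_cases hA : a ∈ D <;> by_cases hB : b ∈ D
      · simp only [edgeF, Sym2.lift_mk, flip, if_pos hA, if_pos hB]
        ring
      · exfalso
        apply hne
        rw [mem_XB]
        exact ⟨a, hA, b, by rw [Finset.mem_sdiff, mem_nbrF]; exact ⟨hadj, hB⟩, rfl⟩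
      · exfalso
        apply hne
        rw [mem_XB]
        refine ⟨b, hB, a, by rw [Finset.mem_sdiff, mem_nbrF]; exact ⟨hadj.symm, hA⟩, ?_⟩
        rw [Sym2.eq_swap]
      · simp only [edgeF, Sym2.lift_mk, flip, if_neg hA, if_neg hB]
        ring
  have hdiff : ∑ e ∈ MEf hc ha hdeg x₀ n, (edgeF (flip D σ) e - edgeF σ e)
      = 2 * (XB hdeg D).card := by
    rw [← Finset.sum_subset hsub (fun e he hne => h2 e he hne)]
    rw [Finset.sum_congr rfl h1, Finset.sum_const]
    simp [mul_comm]
  rw [isingH_eq_sum hc ha hdeg x₀ n σ, isingH_eq_sum hc ha hdeg x₀ n (flip D σ)]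
  rw [Finset.sum_sub_distrib] at hdiff
  omega

end Energy

section Assembly

open scoped Classical

variable (hc : Γ.Connected) (ha : Γ.IsAcyclic)
  (hdeg : ∀ v : V, (Γ.neighborSet v).ncard = 3) (x₀ : V) (n : ℕ)

/-- configurations as a finset -/
noncomputable def Ωf : Finset (V → ℤ) :=
  (omega_finite x₀ (ε := 1) (ball_finite hc ha hdeg x₀ n)).toFinset

lemma mem_Ωf {σ : V → ℤ} : σ ∈ Ωf hc ha hdeg x₀ n ↔ σ ∈ OmegaBC Γ x₀ n 1 :=
  Set.Finite.mem_toFinset _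

include hc ha hdeg in
theorem gibbs_bound {β : ℝ} (hβ : 0 ≤ β) (ht8 : Real.exp (-2*β) ≤ 1/8) :
    0 ≤ gibbs Γ x₀ n β 1 {σ | σ x₀ = -1} ∧
      gibbs Γ x₀ n β 1 {σ | σ x₀ = -1} ≤ 2 * Real.exp (-2*β) ^ 3 := by
  set t : ℝ := Real.exp (-2*β) with htdef
  have ht0 : 0 < t := Real.exp_pos _
  have ht1 : t ≤ 1 := by
    rw [htdef, ← Real.exp_zero]
    apply Real.exp_le_exp.2
    linarith
  set w : (V → ℤ) → ℝ := fun σ => Real.exp (-β * (isingH Γ x₀ n σ : ℝ)) with hwdef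
  set Of := Ωf hc ha hdeg x₀ n with hOf
  set Af := Of.filter (fun σ => σ x₀ = -1) with hAf
  -- rewrite gibbs as a ratio of finset sums
  have hDen : ∑ᶠ σ ∈ OmegaBC Γ x₀ n 1, Real.exp (-β * (isingH Γ x₀ n σ : ℝ))
      = ∑ σ ∈ Of, w σ := by
    have hcoe : OmegaBC Γ x₀ n 1 = ↑Of :=
      ((omega_finite x₀ (ε := 1) (ball_finite hc ha hdeg x₀ n)).coe_toFinset).symm
    rw [hcoe, finsum_mem_coe_finset]
  have hNum : ∑ᶠ σ ∈ {σ : V → ℤ | σ x₀ = -1} ∩ OmegaBC Γ x₀ n 1,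
      Real.exp (-β * (isingH Γ x₀ n σ : ℝ)) = ∑ σ ∈ Af, w σ := by
    have hcoe : {σ : V → ℤ | σ x₀ = -1} ∩ OmegaBC Γ x₀ n 1 = ↑Af := by
      ext σ
      simp only [hAf, Finset.coe_filter, Set.mem_inter_iff, Set.mem_setOf_eq, hOf, mem_Ωf]
      tauto
    rw [hcoe, finsum_mem_coe_finset]
  have hZpos : 0 < ∑ σ ∈ Of, w σ := by
    apply Finset.sum_pos (fun σ _ => Real.exp_pos _)
    refine ⟨fun _ => 1, ?_⟩
    rw [hOf, mem_Ωf]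
    exact ⟨fun x => Or.inl rfl, fun x _ => rfl⟩
  -- the Peierls estimate
  have key : ∑ σ ∈ Af, w σ ≤ (2 * t ^ 3) * ∑ σ ∈ Of, w σ := by
    have hmaps : ∀ σ ∈ Af, ClF hc ha hdeg x₀ n σ ∈ famS hc ha hdeg x₀ n x₀ := by
      intro σ hσ
      rw [hAf, Finset.mem_filter, hOf, mem_Ωf] at hσ
      exact ClF_mem_famS hc ha hdeg x₀ n hσ.1 hσ.2
    rw [← Finset.sum_fiberwise_of_maps_to hmaps w]
    have hfiber : ∀ D ∈ famS hc ha hdeg x₀ n x₀,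
        ∑ σ ∈ Af.filter (fun σ => ClF hc ha hdeg x₀ n σ = D), w σ
          ≤ t ^ (D.card + 2) * ∑ σ ∈ Of, w σ := by
      intro D hD
      set fib := Af.filter (fun σ => ClF hc ha hdeg x₀ n σ = D) with hfib
      have hprop : ∀ σ ∈ fib, σ ∈ OmegaBC Γ x₀ n 1 ∧ σ x₀ = -1 ∧
          ClF hc ha hdeg x₀ n σ = D := by
        intro σ hσ
        rw [hfib, Finset.mem_filter, hAf, Finset.mem_filter, hOf, mem_Ωf] at hσ
        exact ⟨hσ.1.1, hσ.1.2, hσ.2⟩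
      have hstep1 : ∀ σ ∈ fib, w σ ≤ t ^ (D.card + 2) * w (flip D σ) := by
        intro σ hσ
        obtain ⟨hΩ, hroot, hCl⟩ := hprop σ hσ
        have hball : ∀ x ∈ D, x ∈ ballSet Γ x₀ n := by
          intro x hx
          rw [← hCl, mem_ClF hc ha hdeg x₀ n hΩ] at hx
          exact clusterSet_subset_ball x₀ n hΩ hx
        have hneg : ∀ x ∈ D, σ x = -1 := by
          intro x hx
          rw [← hCl, mem_ClF hc ha hdeg x₀ n hΩ] at hx
          exact neg_of_mem_clusterSet x₀ hx
        have hbd : ∀ x ∈ D, ∀ y, Γ.Adj x y → y ∉ D → σ y = 1 := by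
          intro x hx y hxy hy
          rw [← hCl, mem_ClF hc ha hdeg x₀ n hΩ] at hx
          rw [← hCl, mem_ClF hc ha hdeg x₀ n hΩ] at hy
          exact boundary_one x₀ n hΩ hx hxy hy
        have hE := energy_identity hc ha hdeg x₀ n hball hneg hbd
        have hcard := card_XB_ge hc ha hdeg x₀ n hD
        set m := (XB hdeg D).card with hm
        have hwσ : w σ = w (flip D σ) * t ^ m := by
          rw [hwdef]
          simp only
          rw [hE]
          push_cast
          rw [mul_add, Real.exp_add]
          congr 1
          rw [htdef, ← Real.exp_nat_mul]
          congr 1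
          ring
        rw [hwσ, mul_comm]
        apply mul_le_mul_of_nonneg_right _ (Real.exp_pos _).le
        exact pow_le_pow_of_le_one ht0.le ht1 hcard
      have hstep2 : ∑ σ ∈ fib, w (flip D σ) ≤ ∑ σ ∈ Of, w σ := by
        have hinj : Set.InjOn (flip D) ↑fib := by
          intro σ hσ σ' hσ' he
          have := congrArg (flip D) he
          rwa [flip_flip, flip_flip] at this
        have himg : fib.image (flip D) ⊆ Of := by
          intro τ hτ
          rw [Finset.mem_image] at hτ
          obtain ⟨σ, hσ, rfl⟩ := hτ
          obtain ⟨hΩ, hroot, hCl⟩ := hprop σ hσ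
          have hball : ∀ x ∈ D, x ∈ ballSet Γ x₀ n := by
            intro x hx
            rw [← hCl, mem_ClF hc ha hdeg x₀ n hΩ] at hx
            exact clusterSet_subset_ball x₀ n hΩ hx
          rw [hOf, mem_Ωf]
          constructor
          · intro x
            rcases hΩ.1 x with h | h <;> by_cases hx : x ∈ D <;>
              simp [flip, hx, h]
          · intro x hx
            have hxD : x ∉ D := fun h => hx (hball x h)
            simp only [flip, if_neg hxD]
            exact hΩ.2 x hx
        calc ∑ σ ∈ fib, w (flip D σ) = ∑ τ ∈ fib.image (flip D), w τ :=
              (Finset.sum_image (fun σ h1 σ' h2 he => hinj h1 h2 he)).symm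
          _ ≤ ∑ σ ∈ Of, w σ := Finset.sum_le_sum_of_subset_of_nonneg himg
              (fun τ _ _ => (Real.exp_pos _).le)
      calc ∑ σ ∈ fib, w σ ≤ ∑ σ ∈ fib, t ^ (D.card + 2) * w (flip D σ) :=
            Finset.sum_le_sum hstep1
        _ = t ^ (D.card + 2) * ∑ σ ∈ fib, w (flip D σ) := by rw [Finset.mul_sum]
        _ ≤ t ^ (D.card + 2) * ∑ σ ∈ Of, w σ := by
            apply mul_le_mul_of_nonneg_left hstep2 (pow_nonneg ht0.le _)
    calc ∑ D ∈ famS hc ha hdeg x₀ n x₀,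
          ∑ σ ∈ Af.filter (fun σ => ClF hc ha hdeg x₀ n σ = D), w σ
        ≤ ∑ D ∈ famS hc ha hdeg x₀ n x₀, t ^ (D.card + 2) * ∑ σ ∈ Of, w σ :=
          Finset.sum_le_sum hfiber
      _ = (∑ D ∈ famS hc ha hdeg x₀ n x₀, t ^ (D.card + 2)) * ∑ σ ∈ Of, w σ := by
          rw [Finset.sum_mul]
      _ ≤ (2 * t ^ 3) * ∑ σ ∈ Of, w σ := by
          apply mul_le_mul_of_nonneg_right _ hZpos.le
          have hS : ∑ D ∈ famS hc ha hdeg x₀ n x₀, t ^ (D.card + 2)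
              = Sval hc ha hdeg x₀ n t x₀ * t ^ 2 := by
            rw [Sval, Finset.sum_mul]
            apply Finset.sum_congr rfl
            intro D _
            rw [← pow_add]
          rw [hS]
          have := Sval_le hc ha hdeg x₀ n ht0.le ht8 x₀
          calc Sval hc ha hdeg x₀ n t x₀ * t ^ 2 ≤ (2 * t) * t ^ 2 := by
                apply mul_le_mul_of_nonneg_right this (pow_nonneg ht0.le _)
            _ = 2 * t ^ 3 := by ring
  rw [gibbs, hDen, hNum]
  constructor
  · apply div_nonneg _ hZpos.le
    exact Finset.sum_nonneg (fun σ _ => (Real.exp_pos _).le)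
  · rw [div_le_iff₀ hZpos]
    exact key

end Assembly


open Filter in
theorem main_tendsto (hc : Γ.Connected) (ha : Γ.IsAcyclic)
    (hdeg : ∀ v : V, (Γ.neighborSet v).ncard = 3) (x₀ : V) :
    Filter.Tendsto (fun β : ℝ =>
        ⨆ n : {n : ℕ // 1 ≤ n}, gibbs Γ x₀ n β 1 {σ | σ x₀ = -1})
      Filter.atTop (nhds 0) := by
  have hbound : ∀ β : ℝ, 2 ≤ β → ∀ n : ℕ,
      0 ≤ gibbs Γ x₀ n β 1 {σ | σ x₀ = -1} ∧
        gibbs Γ x₀ n β 1 {σ | σ x₀ = -1} ≤ 2 * Real.exp (-2*β) ^ 3 := by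
    intro β hβ n
    apply gibbs_bound hc ha hdeg x₀ n (by linarith)
    have h1 : Real.exp (-2*β) ≤ Real.exp (-4 : ℝ) := Real.exp_le_exp.2 (by linarith)
    have h3 : (8:ℝ) ≤ Real.exp 4 := by
      have h4 : (3:ℝ) ≤ Real.exp 2 := by
        have := Real.add_one_le_exp (2:ℝ)
        linarith
      have h5 : Real.exp 4 = Real.exp 2 * Real.exp 2 := by
        rw [← Real.exp_add]; norm_num
      nlinarith
    have h2 : Real.exp (-4 : ℝ) ≤ 1/8 := by
      rw [Real.exp_neg]
      have h6 : (Real.exp 4)⁻¹ ≤ (8:ℝ)⁻¹ := inv_anti₀ (by norm_num) h3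
      calc (Real.exp 4)⁻¹ ≤ (8:ℝ)⁻¹ := h6
        _ = 1/8 := by norm_num
    linarith
  have hupper : ∀ᶠ β in atTop, (⨆ n : {n : ℕ // 1 ≤ n},
      gibbs Γ x₀ n β 1 {σ | σ x₀ = -1}) ≤ 2 * Real.exp (-2*β) ^ 3 := by
    filter_upwards [eventually_ge_atTop (2:ℝ)] with β hβ
    exact ciSup_le (fun n => (hbound β hβ n).2)
  have hlower : ∀ᶠ β in atTop, (0:ℝ) ≤ ⨆ n : {n : ℕ // 1 ≤ n},
      gibbs Γ x₀ n β 1 {σ | σ x₀ = -1} := by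
    filter_upwards [eventually_ge_atTop (2:ℝ)] with β hβ
    have hbdd : BddAbove (Set.range fun n : {n : ℕ // 1 ≤ n} =>
        gibbs Γ x₀ n β 1 {σ | σ x₀ = -1}) := by
      refine ⟨2 * Real.exp (-2*β) ^ 3, ?_⟩
      rintro x ⟨m, rfl⟩
      exact (hbound β hβ m).2
    exact le_trans (hbound β hβ 1).1 (le_ciSup hbdd ⟨1, le_refl 1⟩)
  have hzero : Tendsto (fun β : ℝ => 2 * Real.exp (-2*β) ^ 3) atTop (nhds 0) := by
    have h1 : Tendsto (fun β : ℝ => -2*β) atTop atBot := by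
      have h1a : Tendsto (fun β : ℝ => 2*β) atTop atTop :=
        Tendsto.const_mul_atTop (by norm_num) tendsto_id
      have h1b := tendsto_neg_atTop_atBot.comp h1a
      convert h1b using 2 with β
      simp [Function.comp]
      try ring
    have h2 : Tendsto (fun β : ℝ => Real.exp (-2*β)) atTop (nhds 0) :=
      Real.tendsto_exp_atBot.comp h1
    have h3 : Tendsto (fun β : ℝ => Real.exp (-2*β) ^ 3) atTop (nhds 0) := by
      have := h2.pow 3
      simpa using this
    have h4 := h3.const_mul (2:ℝ)
    simpa using h4
  exact tendsto_of_tendsto_of_tendsto_of_le_of_le' tendsto_const_nhds hzero hlower hupper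

end CayleyAux

/-- The probability that the root has spin `−1` under the finite-volume Gibbs measure with
all-plus boundary condition tends to `0` as `β → ∞`, uniformly in the volume. -/
theorem root_minus_probability_tendsto_zero {V : Type*} (Γ : SimpleGraph V)
    (hΓ : IsCayleyTree2 Γ) (x₀ : V) :
    Filter.Tendsto (fun β : ℝ =>
        ⨆ n : {n : ℕ // 1 ≤ n}, gibbs Γ x₀ n β 1 {σ | σ x₀ = -1})
      Filter.atTop (nhds 0) := by
  classical
  letI : DecidableEq V := Classical.decEq V
  obtain ⟨hc, ha, hdeg⟩ := hΓ
  exact CayleyAux.main_tendsto hc ha hdeg x₀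
end
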